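/- arXiv:2404.15479 — 11 statements merged into one kernel-verified Lean document; each statement's English description precedes it below -/
import Mathlib

section
/- In the Baumslag–Solitar group BS(1,2) = ⟨a, t ∣ t a t⁻¹ = a²⟩, the elements t and a·t freely generate a free submonoid of rank 2; that is, the monoid homomorphism from the free monoid on two generators sending the generators to t and a·t respectively is injective. -/
/-!
`BS(1,2)` acts on `ℚ` by affine maps, `a` as `x ↦ x + 1` and `t` as `x ↦ 2 * x`. Then `t` and
`a * t` act as `x ↦ 2 * x` and `x ↦ 2 * x + 1`, so a word in them sends `1` to the natural number
whose binary expansion is a leading `1` followed by the letters of the word, read from the last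
one to the first. Binary expansions are unique, hence distinct words give distinct group elements.
-/

/-- The single defining relator of `BS(1,2) = ⟨a, t ∣ t a t⁻¹ = a²⟩`, with
generator `0` playing the role of `a` and generator `1` the role of `t`. -/
def BS12rels : Set (FreeGroup (Fin 2)) :=
  {FreeGroup.of 1 * FreeGroup.of 0 * (FreeGroup.of 1)⁻¹ * ((FreeGroup.of 0) ^ 2)⁻¹}

def binaryValue : List (Fin 2) → ℕ
  | [] => 1
  | i :: l => 2 * binaryValue l + i

lemma one_le_binaryValue (l : List (Fin 2)) : 1 ≤ binaryValue l := by
  induction l with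
  | nil => rfl
  | cons i l ih => simp only [binaryValue]; omega

lemma binaryValue_injective : Function.Injective binaryValue := by
  intro l₁
  induction l₁ with
  | nil =>
    rintro (_ | ⟨j, l₂⟩) h
    · rfl
    · have := one_le_binaryValue l₂
      simp only [binaryValue] at h
      omega
  | cons i l₁ ih =>
    rintro (_ | ⟨j, l₂⟩) h
    · have := one_le_binaryValue l₁
      simp only [binaryValue] at h
      omega
    · simp only [binaryValue] at h
      have hi := i.isLt
      have hj := j.isLt
      obtain rfl : i = j := Fin.ext (by omega)
      rw [ih (by omega : binaryValue l₁ = binaryValue l₂)]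

namespace BS12

def affineGen : Fin 2 → Equiv.Perm ℚ :=
  ![Equiv.addRight 1, Equiv.mulLeft₀ 2 two_ne_zero]

lemma affineGen_rels : ∀ r ∈ BS12rels, FreeGroup.lift affineGen r = 1 := by
  rintro r rfl
  ext x
  simp only [affineGen, sq, mul_inv_rev, map_mul, map_inv, FreeGroup.lift_apply_of,
    Matrix.cons_val_zero, Matrix.cons_val_one, Matrix.cons_val_fin_one, Equiv.Perm.inv_def,
    Equiv.addRight_symm, Equiv.Perm.mul_apply, Equiv.coe_addRight, Equiv.mulLeft₀_symm_apply,
    Equiv.mulLeft₀_apply, Equiv.Perm.coe_one, id_eq]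
  ring

def toAffine : PresentedGroup BS12rels →* Equiv.Perm ℚ :=
  PresentedGroup.toGroup affineGen_rels

def freeGen (i : Fin 2) : PresentedGroup BS12rels :=
  if i = 0 then PresentedGroup.of 1 else PresentedGroup.of 0 * PresentedGroup.of 1

lemma toAffine_freeGen (i : Fin 2) (x : ℚ) : toAffine (freeGen i) x = 2 * x + i := by
  fin_cases i <;> simp [freeGen, toAffine, PresentedGroup.toGroup.of, affineGen]

lemma toAffine_lift_freeGen_apply_one (w : FreeMonoid (Fin 2)) :
    toAffine (FreeMonoid.lift freeGen w) 1 = binaryValue w.toList := by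
  induction w using FreeMonoid.recOn with
  | one => simp [binaryValue]
  | of_mul i w ih => simp [Equiv.Perm.mul_apply, ih, toAffine_freeGen, binaryValue]

end BS12

/-- In `BS(1,2)`, the elements `t` and `a * t` freely generate a free submonoid of rank 2. -/
theorem bs12_free_submonoid :
    Function.Injective
      (FreeMonoid.lift
        (fun i : Fin 2 =>
          if i = 0 then (PresentedGroup.of 1 : PresentedGroup BS12rels)
          else PresentedGroup.of 0 * PresentedGroup.of 1) :
        FreeMonoid (Fin 2) →* PresentedGroup BS12rels) := by
  have h : Function.Injective
      (fun w : FreeMonoid (Fin 2) => BS12.toAffine (FreeMonoid.lift BS12.freeGen w) 1) := by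
    intro w₁ w₂ h
    simp only [BS12.toAffine_lift_freeGen_apply_one, Nat.cast_inj] at h
    exact FreeMonoid.toList.injective (binaryValue_injective h)
  exact Function.Injective.of_comp (f := fun g => BS12.toAffine g 1) h
end

section
/- Let A(P₄) = ⟨α, β, γ, δ ∣ αβ = βα, βγ = γβ, γδ = δγ⟩ and let Φ: A(P₄) → ℤ be the homomorphism sending each generator to 1. Then the kernel of Φ is a free group of rank 3, freely generated by α⁻¹β, β⁻¹γ, and γ⁻¹δ. -/
open scoped commutatorElement

/-- The defining relators of the right-angled Artin group `A(P₄)` on the path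
`α₀ — α₁ — α₂ — α₃`: the three commutators of consecutive generators. -/
def P4rels : Set (FreeGroup (Fin 4)) :=
  {⁅FreeGroup.of (0 : Fin 4), FreeGroup.of 1⁆, ⁅FreeGroup.of (1 : Fin 4), FreeGroup.of 2⁆,
    ⁅FreeGroup.of (2 : Fin 4), FreeGroup.of 3⁆}

/-- The right-angled Artin group on the path with 4 vertices. -/
abbrev AP4 : Type := PresentedGroup P4rels

/-! Write `xᵢ = αᵢ⁻¹ αᵢ₊₁`, `t = α₀` and `pᵢ = xᵢ₋₁ ⋯ x₀`, so that `αᵢ = pᵢ t`. Since consecutive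
generators commute, conjugation by `t` maps `xᵢ` to the image of `pᵢ⁻¹ xᵢ pᵢ`, and these words
define an automorphism `θ` of the free group `F₃` (its inverse sends `xᵢ` to `qᵢ xᵢ qᵢ⁻¹` with
`qᵢ = x₀ ⋯ xᵢ₋₁`). Then `αᵢ ↦ (pᵢ, t)` and `(xᵢ, 1) ↦ xᵢ`, `(1, t) ↦ α₀` are mutually inverse
isomorphisms between `A(P₄)` and the mapping torus `F₃ ⋊_θ ℤ`. They carry `Φ` to the
projection onto `ℤ`, and the subgroup generated by the `xᵢ` onto `F₃`, the kernel of that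
projection. -/

open FreeGroup (of)
open SemidirectProduct Multiplicative

lemma MonoidHom.map_zpow_apply_of_map_apply_eq_conj {N G : Type*} [Group N] [Group G]
    (f : N →* G) (θ : MulAut N) (g : G) (h : ∀ w, f (θ w) = g * f w * g⁻¹) (k : ℤ) (w : N) :
    f ((θ ^ k) w) = g ^ k * f w * (g ^ k)⁻¹ := by
  induction k using Int.induction_on generalizing w with
  | zero => simp
  | succ k ih => rw [zpow_add_one, MulAut.mul_apply, ih, h, zpow_add_one]; group
  | pred k ih =>
    have h' : f (θ⁻¹ w) = g⁻¹ * f w * g := by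
      rw [← MulAut.apply_inv_self (M := N) θ w, h (θ⁻¹ w), MulAut.apply_inv_self]; group
    rw [zpow_sub_one, MulAut.mul_apply, ih, h', zpow_sub_one]; group

lemma SemidirectProduct.range_symm_comp_inl {G N H : Type*} [Group G] [Group N] [Group H]
    {φ : H →* MulAut N} (e : G ≃* N ⋊[φ] H) :
    (e.symm.toMonoidHom.comp inl).range = (rightHom.comp e.toMonoidHom).ker := by
  rw [← MonoidHom.map_range, range_inl_eq_ker_rightHom, Subgroup.map_equiv_eq_comap_symm',
    MulEquiv.symm_symm, MonoidHom.comap_ker]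

namespace BestvinaBrady

variable {n : ℕ}

def descProd : Fin (n + 1) → FreeGroup (Fin n) := Fin.induction 1 fun i p => of i * p

def ascProd : Fin (n + 1) → FreeGroup (Fin n) := Fin.induction 1 fun i q => q * of i

@[simp] lemma descProd_zero : descProd (0 : Fin (n + 1)) = 1 := rfl

@[simp] lemma descProd_succ (i : Fin n) : descProd i.succ = of i * descProd i.castSucc := by
  simp [descProd]

@[simp] lemma ascProd_zero : ascProd (0 : Fin (n + 1)) = 1 := rfl

@[simp] lemma ascProd_succ (i : Fin n) : ascProd i.succ = ascProd i.castSucc * of i := by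
  simp [ascProd]

def monodromyHom : FreeGroup (Fin n) →* FreeGroup (Fin n) :=
  FreeGroup.lift fun i => (descProd i.castSucc)⁻¹ * of i * descProd i.castSucc

def monodromyInvHom : FreeGroup (Fin n) →* FreeGroup (Fin n) :=
  FreeGroup.lift fun i => ascProd i.castSucc * of i * (ascProd i.castSucc)⁻¹

@[simp] lemma monodromyHom_of (i : Fin n) :
    monodromyHom (of i) = (descProd i.castSucc)⁻¹ * of i * descProd i.castSucc :=
  FreeGroup.lift_apply_of

@[simp] lemma monodromyInvHom_of (i : Fin n) :
    monodromyInvHom (of i) = ascProd i.castSucc * of i * (ascProd i.castSucc)⁻¹ :=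
  FreeGroup.lift_apply_of

lemma monodromyHom_ascProd (i : Fin (n + 1)) : monodromyHom (ascProd i) = descProd i := by
  induction i using Fin.induction with
  | zero => simp
  | succ i ih => simp [ih, mul_assoc]

lemma monodromyInvHom_descProd (i : Fin (n + 1)) : monodromyInvHom (descProd i) = ascProd i := by
  induction i using Fin.induction with
  | zero => simp
  | succ i ih => simp [ih, mul_assoc]

def monodromy : FreeGroup (Fin n) ≃* FreeGroup (Fin n) :=
  monodromyHom.toMulEquiv monodromyInvHom
    (FreeGroup.ext_hom _ _ fun i => by simp [monodromyInvHom_descProd, mul_assoc])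
    (FreeGroup.ext_hom _ _ fun i => by simp [monodromyHom_ascProd, mul_assoc])

@[simp] lemma monodromy_of (i : Fin n) :
    monodromy (of i) = (descProd i.castSucc)⁻¹ * of i * descProd i.castSucc := by
  simp [monodromy]

abbrev MappingTorus (n : ℕ) : Type :=
  FreeGroup (Fin n) ⋊[zpowersHom (MulAut (FreeGroup (Fin n))) monodromy] Multiplicative ℤ

def vertex (i : Fin (n + 1)) : MappingTorus n := inl (descProd i) * inr (ofAdd 1)

lemma rightHom_vertex (i : Fin (n + 1)) : rightHom (vertex i) = ofAdd 1 := by simp [vertex]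

lemma vertex_zero : vertex (0 : Fin (n + 1)) = inr (ofAdd 1) := by simp [vertex]

lemma vertex_succ (i : Fin n) : vertex i.succ = vertex i.castSucc * inl (of i) := by
  ext <;> simp [vertex, zpowersHom_apply, mul_assoc]

lemma commute_vertex_castSucc_inl (i : Fin n) : Commute (vertex i.castSucc) (inl (of i)) := by
  ext <;> simp [vertex, zpowersHom_apply, mul_assoc]

lemma commute_vertex (i : Fin n) : Commute (vertex i.castSucc) (vertex i.succ) := by
  rw [vertex_succ]
  exact (Commute.refl _).mul_right (commute_vertex_castSucc_inl i)

lemma vertex_inv_mul_vertex (i : Fin n) : (vertex i.castSucc)⁻¹ * vertex i.succ = inl (of i) := by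
  rw [vertex_succ, inv_mul_cancel_left]

section Lift

variable {G : Type*} [Group G] (a : Fin (n + 1) → G)

def pathLift : FreeGroup (Fin n) →* G := FreeGroup.lift fun i => (a i.castSucc)⁻¹ * a i.succ

@[simp] lemma pathLift_of (i : Fin n) : pathLift a (of i) = (a i.castSucc)⁻¹ * a i.succ :=
  FreeGroup.lift_apply_of

variable {a}

lemma pathLift_descProd (ha : ∀ i : Fin n, Commute (a i.castSucc) (a i.succ))
    (i : Fin (n + 1)) : pathLift a (descProd i) = a i * (a 0)⁻¹ := by
  induction i using Fin.induction with
  | zero => simp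
  | succ i ih => rw [descProd_succ, map_mul, ih, pathLift_of, ← mul_assoc, (ha i).inv_mul_cancel]

lemma pathLift_monodromy (ha : ∀ i : Fin n, Commute (a i.castSucc) (a i.succ))
    (w : FreeGroup (Fin n)) :
    pathLift a (monodromy w) = a 0 * pathLift a w * (a 0)⁻¹ := by
  suffices (pathLift a).comp monodromy.toMonoidHom =
      (MulAut.conj (a 0)).toMonoidHom.comp (pathLift a) from DFunLike.congr_fun this w
  refine FreeGroup.ext_hom _ _ fun i => ?_
  rw [MonoidHom.comp_apply, MonoidHom.comp_apply, MulEquiv.coe_toMonoidHom,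
    MulEquiv.coe_toMonoidHom, monodromy_of, map_mul, map_mul, map_inv, pathLift_descProd ha,
    pathLift_of, MulAut.conj_apply]
  calc (a i.castSucc * (a 0)⁻¹)⁻¹ * ((a i.castSucc)⁻¹ * a i.succ) * (a i.castSucc * (a 0)⁻¹)
      = a 0 * ((a i.castSucc)⁻¹ * ((a i.castSucc)⁻¹ * a i.succ * a i.castSucc)) * (a 0)⁻¹ := by
        group
    _ = a 0 * ((a i.castSucc)⁻¹ * a i.succ) * (a 0)⁻¹ := by rw [(ha i).inv_mul_cancel]

def toGroup (ha : ∀ i : Fin n, Commute (a i.castSucc) (a i.succ)) : MappingTorus n →* G :=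
  SemidirectProduct.lift (pathLift a) (zpowersHom G (a 0)) fun k => MonoidHom.ext fun w => by
    simpa [zpowersHom_apply, ← map_zpow, MulAut.conj_apply] using
      (pathLift a).map_zpow_apply_of_map_apply_eq_conj monodromy (a 0) (pathLift_monodromy ha)
        k.toAdd w

lemma toGroup_comp_inl (ha : ∀ i : Fin n, Commute (a i.castSucc) (a i.succ)) :
    (toGroup ha).comp inl = pathLift a :=
  lift_comp_inl _ _ _

lemma toGroup_vertex (ha : ∀ i : Fin n, Commute (a i.castSucc) (a i.succ))
    (i : Fin (n + 1)) : toGroup ha (vertex i) = a i := by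
  rw [vertex, map_mul, toGroup, lift_inl, lift_inr, pathLift_descProd ha,
    zpowersHom_apply, toAdd_ofAdd, zpow_one, inv_mul_cancel_right]

lemma comp_toGroup_eq_id (ha : ∀ i : Fin n, Commute (a i.castSucc) (a i.succ))
    {F : G →* MappingTorus n} (hF : ∀ i, F (a i) = vertex i) :
    F.comp (toGroup ha) = MonoidHom.id _ := by
  refine SemidirectProduct.hom_ext (FreeGroup.ext_hom _ _ fun i => ?_) (MonoidHom.ext_mint ?_)
  · simp [toGroup, hF, vertex_inv_mul_vertex]
  · simp [toGroup, zpowersHom_apply, hF, vertex_zero]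

end Lift

end BestvinaBrady

namespace AP4

open BestvinaBrady

lemma P4rels_eq : P4rels = Set.range fun i : Fin 3 => ⁅of i.castSucc, of i.succ⁆ := by
  ext r; simp [P4rels, Fin.exists_fin_succ, eq_comm]

lemma commute_of (i : Fin 3) :
    Commute (PresentedGroup.of i.castSucc : AP4) (PresentedGroup.of i.succ) := by
  have h := PresentedGroup.one_of_mem (P4rels_eq ▸ Set.mem_range_self i : _ ∈ P4rels)
  rwa [map_commutatorElement, commutatorElement_eq_one_iff_mul_comm] at h

def toMappingTorus : AP4 →* MappingTorus 3 :=
  PresentedGroup.toGroup (f := vertex) <| by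
    rw [P4rels_eq]
    rintro _ ⟨i, rfl⟩
    rw [map_commutatorElement, FreeGroup.lift_apply_of, FreeGroup.lift_apply_of,
      commutatorElement_eq_one_iff_mul_comm]
    exact commute_vertex i

lemma toMappingTorus_of (i : Fin 4) : toMappingTorus (PresentedGroup.of i) = vertex i :=
  PresentedGroup.toGroup.of _

def equivMappingTorus : AP4 ≃* MappingTorus 3 :=
  toMappingTorus.toMulEquiv (toGroup commute_of)
    (PresentedGroup.ext fun i => by simp [toMappingTorus_of, toGroup_vertex])
    (comp_toGroup_eq_id commute_of toMappingTorus_of)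

lemma equivMappingTorus_of (i : Fin 4) : equivMappingTorus (PresentedGroup.of i) = vertex i :=
  toMappingTorus_of i

end AP4

open BestvinaBrady in
/-- If `Φ : A(P₄) → ℤ` sends every standard generator to `1`, then its kernel
(the Bestvina–Brady subgroup) is free of rank 3, freely generated by
`α⁻¹β`, `β⁻¹γ`, `γ⁻¹δ`: the homomorphism from the free group of rank `3`
sending the `i`-th basis element to `(PresentedGroup.of i)⁻¹ * PresentedGroup.of (i+1)`
is injective, and its range is exactly `ker Φ`. -/
theorem bestvinaBrady_AP4_free (Φ : AP4 →* Multiplicative ℤ)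
    (hΦ : ∀ i : Fin 4, Φ (PresentedGroup.of i) = Multiplicative.ofAdd 1) :
    Function.Injective
      (FreeGroup.lift (fun i : Fin 3 =>
        (PresentedGroup.of (i.castSucc) : AP4)⁻¹ * PresentedGroup.of i.succ)) ∧
    (FreeGroup.lift (fun i : Fin 3 =>
        (PresentedGroup.of (i.castSucc) : AP4)⁻¹ * PresentedGroup.of i.succ)).range = Φ.ker := by
  let e := AP4.equivMappingTorus
  have hL : FreeGroup.lift (fun i : Fin 3 =>
      (PresentedGroup.of (i.castSucc) : AP4)⁻¹ * PresentedGroup.of i.succ) =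
      e.symm.toMonoidHom.comp inl :=
    (toGroup_comp_inl AP4.commute_of).symm
  have hΦe : Φ = rightHom.comp e.toMonoidHom :=
    PresentedGroup.ext fun i => by
      rw [hΦ, MonoidHom.comp_apply, MulEquiv.coe_toMonoidHom, AP4.equivMappingTorus_of,
        rightHom_vertex]
  rw [hL, hΦe]
  exact ⟨e.symm.injective.comp inl_injective, range_symm_comp_inl e⟩
end

section
/- Let φ: A(P₄) → G be a group homomorphism from the right-angled Artin group A(P₄) = ⟨α, β, γ, δ ∣ αβ = βα, βγ = γβ, γδ = δγ⟩ to an arbitrary group G. Then φ is injective if and only if φ(α⁻¹β), φ(β⁻¹γ), and φ(γ⁻¹δ) freely generate a free subgroup of rank 3 in G. -/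
/-!
`A(P₄)` is the semidirect product `F₃ ⋊ ℤ`, where `F₃` is the kernel of the map to `ℤ`, freely
generated by `α₀⁻¹α₁, α₁⁻¹α₂, α₂⁻¹α₃`, and `ℤ` is generated by `α₁`, acting by conjugation.
This kernel has trivial centralizer: if `(w, n)` centralizes it, then `w` commutes with the first
two basis elements, which the action fixes, so `w = 1`; then `α₁ⁿ` has to commute with
`α₂⁻¹α₃`, which in the free group `F₃` forces `n = 0`. So if `φ` is injective on the kernel, then
`ker φ` is a normal subgroup meeting the normal subgroup `F₃` trivially, hence it centralizes `F₃`
and is trivial.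
-/

open scoped commutatorElement

open Function SemidirectProduct Multiplicative
open FreeGroup (of)

namespace FreeGroup

variable {α : Type*} [DecidableEq α]

theorem fst_eq_of_mem_head?_toWord_of_commute {w : FreeGroup α} {x : α}
    (h : Commute w (of x)) : ∀ a ∈ w.toWord.head?, a.1 = x := by
  intro a ha
  obtain ⟨W, hW⟩ := List.head?_eq_some_iff.mp ha
  by_contra hax
  have hleft : (of x * w).toWord = (x, true) :: w.toWord := by
    rw [toWord_mul, toWord_of, List.singleton_append, IsReduced.reduce_eq]
    rw [hW, isReduced_cons_cons]
    exact ⟨fun hxa => absurd hxa.symm hax, hW ▸ isReduced_toWord⟩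
  -- `(w * of x).toWord = (x, true) :: w.toWord` is a sublist of `w.toWord ++ [(x, true)]` of the
  -- same length, so the two lists are equal and start with the same letter.
  have hsub := toWord_mul_sublist w (of x)
  rw [h.eq, hleft, toWord_of] at hsub
  have heq := hsub.eq_of_length (by simp)
  rw [hW] at heq
  exact hax (congrArg Prod.fst (List.cons.inj heq).1).symm

theorem eq_one_of_commute_of_ne {w : FreeGroup α} {x y : α} (hxy : x ≠ y)
    (hx : Commute w (of x)) (hy : Commute w (of y)) : w = 1 := by
  rw [← toWord_eq_nil_iff]
  cases hw : w.toWord with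
  | nil => rfl
  | cons a W =>
    have hax := fst_eq_of_mem_head?_toWord_of_commute hx a (by simp [hw])
    have hay := fst_eq_of_mem_head?_toWord_of_commute hy a (by simp [hw])
    exact absurd (hax.symm.trans hay) hxy

theorem eq_zero_of_commute_zpow_of {x y : α} (hxy : x ≠ y) {n : ℤ}
    (h : Commute (of x ^ n) (of y)) : n = 0 := by
  have := eq_one_of_commute_of_ne hxy ((Commute.refl (of x)).zpow_left n) h
  simpa [of_ne_one] using this

end FreeGroup

lemma MulAut.zpow_apply_eq_self_of_apply_eq_self {M : Type*} [Group M] {e : MulAut M} {x : M}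
    (h : e x = x) (k : ℤ) : (e ^ k) x = x := by
  have := Equiv.Perm.zpow_apply_eq_self_of_apply_eq_self (f := MulAut.toPerm M e) h k
  rwa [← map_zpow] at this

theorem MonoidHom.injective_iff_injective_comp_of_centralizer_eq_bot {N H G : Type*} [Group N]
    [Group H] [Group G] {ι : N →* H} (hι : Injective ι) [ι.range.Normal]
    (hc : Subgroup.centralizer (Set.range ι) = ⊥) (f : H →* G) :
    Injective f ↔ Injective (f.comp ι) := by
  refine ⟨fun hf => hf.comp hι, fun hfι => (injective_iff_map_eq_one f).2 fun g hg => ?_⟩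
  have hdisj : Disjoint f.ker ι.range := by
    rw [Subgroup.disjoint_def]
    rintro _ hker ⟨n, rfl⟩
    rw [(injective_iff_map_eq_one _).1 hfι n hker, map_one]
  have hg_mem : g ∈ Subgroup.centralizer (Set.range ι) := fun h hh =>
    (Subgroup.commute_of_normal_of_disjoint _ _ inferInstance inferInstance hdisj g h hg hh).eq.symm
  rwa [hc, Subgroup.mem_bot] at hg_mem

theorem PresentedGroup.commute_of_commutatorElement_mem {α : Type*} {rels : Set (FreeGroup α)}
    {x y : α} (h : ⁅FreeGroup.of x, FreeGroup.of y⁆ ∈ rels) :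
    Commute (PresentedGroup.of x : PresentedGroup rels) (PresentedGroup.of y) := by
  have := PresentedGroup.one_of_mem h
  rwa [map_commutatorElement, commutatorElement_eq_one_iff_commute] at this

namespace SemidirectProduct

variable {N G : Type*} [Group N] [Group G] {θ : G →* MulAut N}

instance normal_range_inl : (inl : N →* N ⋊[θ] G).range.Normal := by
  rw [range_inl_eq_ker_rightHom]
  infer_instance

theorem inl_mul_eq_mul_inl_iff (x : N ⋊[θ] G) (n : N) :
    inl n * x = x * inl n ↔ n * x.left = x.left * θ x.right n := by
  simp [SemidirectProduct.ext_iff]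

end SemidirectProduct

namespace AP4

local notation "F₃" => FreeGroup (Fin 3)
local notation "α₀" => (PresentedGroup.of (0 : Fin 4) : AP4)
local notation "α₁" => (PresentedGroup.of (1 : Fin 4) : AP4)
local notation "α₂" => (PresentedGroup.of (2 : Fin 4) : AP4)
local notation "α₃" => (PresentedGroup.of (3 : Fin 4) : AP4)

lemma commute_α₀_α₁ : Commute α₀ α₁ :=
  PresentedGroup.commute_of_commutatorElement_mem (by simp [P4rels])
lemma commute_α₁_α₂ : Commute α₁ α₂ :=
  PresentedGroup.commute_of_commutatorElement_mem (by simp [P4rels])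
lemma commute_α₂_α₃ : Commute α₂ α₃ :=
  PresentedGroup.commute_of_commutatorElement_mem (by simp [P4rels])

/-- Conjugation by `α₁`, written in the basis `αᵢ⁻¹αᵢ₊₁` of the kernel (see
`kernelBasis_conjα₁`). -/
def conjα₁ : MulAut F₃ :=
  MonoidHom.toMulEquiv (FreeGroup.lift ![of 0, of 1, (of 1)⁻¹ * of 2 * of 1])
    (FreeGroup.lift ![of 0, of 1, of 1 * of 2 * (of 1)⁻¹])
    (by ext i; fin_cases i <;> simp [mul_assoc])
    (by ext i; fin_cases i <;> simp [mul_assoc])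

@[simp] lemma conjα₁_of_zero : conjα₁ (of 0) = of 0 := by simp [conjα₁]
@[simp] lemma conjα₁_of_one : conjα₁ (of 1) = of 1 := by simp [conjα₁]
@[simp] lemma conjα₁_of_two : conjα₁ (of 2) = (of 1)⁻¹ * of 2 * of 1 := by simp [conjα₁]

@[simp] lemma conjα₁_symm_of_zero : conjα₁.symm (of 0) = of 0 := by
  rw [MulEquiv.symm_apply_eq, conjα₁_of_zero]
@[simp] lemma conjα₁_symm_of_one : conjα₁.symm (of 1) = of 1 := by
  rw [MulEquiv.symm_apply_eq, conjα₁_of_one]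
@[simp] lemma conjα₁_symm_of_two : conjα₁.symm (of 2) = of 1 * of 2 * (of 1)⁻¹ := by
  rw [MulEquiv.symm_apply_eq]
  simp [mul_assoc]

lemma conjα₁_zpow_of_two (k : ℤ) :
    (conjα₁ ^ k) (of 2) = (of 1 ^ k)⁻¹ * of 2 * of 1 ^ k := by
  have hb : ∀ k : ℤ, (conjα₁ ^ k) (of 1) = of 1 :=
    MulAut.zpow_apply_eq_self_of_apply_eq_self conjα₁_of_one
  induction k using Int.induction_on with
  | zero => simp
  | succ k ih =>
    rw [zpow_add_one, MulAut.mul_apply, conjα₁_of_two, map_mul, map_mul, map_inv, hb, ih]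
    group
  | pred k ih =>
    rw [zpow_sub_one, MulAut.mul_apply, MulAut.inv_apply, conjα₁_symm_of_two, map_mul, map_mul,
      map_inv, hb, ih]
    group

abbrev FreeByCyclic : Type := F₃ ⋊[zpowersHom (MulAut F₃) conjα₁] Multiplicative ℤ

theorem centralizer_range_inl_eq_bot :
    Subgroup.centralizer (Set.range (inl : F₃ →* FreeByCyclic)) = ⊥ := by
  refine eq_bot_iff.2 fun x hx => ?_
  have hcomm (v : F₃) : v * x.left = x.left * (conjα₁ ^ toAdd x.right) v :=
    (inl_mul_eq_mul_inl_iff x v).1 (hx _ ⟨v, rfl⟩)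
  have hfix (i : Fin 3) (hi : conjα₁ (of i) = of i) : Commute x.left (of i) := by
    have := hcomm (of i)
    rw [MulAut.zpow_apply_eq_self_of_apply_eq_self hi] at this
    exact this.symm
  have hleft : x.left = 1 := FreeGroup.eq_one_of_commute_of_ne (by decide)
    (hfix 0 conjα₁_of_zero) (hfix 1 conjα₁_of_one)
  have hb : Commute (of 1 ^ toAdd x.right) (of (2 : Fin 3)) := by
    have hc := hcomm (of 2)
    rw [hleft, one_mul, mul_one, conjα₁_zpow_of_two, mul_assoc, eq_inv_mul_iff_mul_eq] at hc
    exact hc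
  have hright : toAdd x.right = 0 := FreeGroup.eq_zero_of_commute_zpow_of (by decide) hb
  exact SemidirectProduct.ext hleft hright

/-- The images are forced by `α₁ ↦ inr 1` and `αᵢ⁻¹αᵢ₊₁ ↦ inl (of i)`. -/
def toFreeByCyclic : AP4 →* FreeByCyclic :=
  PresentedGroup.toGroup (f := ![inl (of 0)⁻¹ * inr (ofAdd 1), inr (ofAdd 1),
    inl (of 1) * inr (ofAdd 1), inl (of 2 * of 1) * inr (ofAdd 1)]) (by
    simp only [P4rels, Set.mem_insert_iff, Set.mem_singleton_iff]
    rintro r (rfl | rfl | rfl) <;>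
      simp [commutatorElement_eq_one_iff_commute, Commute, SemiconjBy, SemidirectProduct.ext_iff]
    group)

def kernelBasis : F₃ →* AP4 :=
  FreeGroup.lift fun i => (PresentedGroup.of i.castSucc)⁻¹ * PresentedGroup.of i.succ

lemma kernelBasis_conjα₁ (x : F₃) : kernelBasis (conjα₁ x) = α₁ * kernelBasis x * α₁⁻¹ := by
  suffices kernelBasis.comp conjα₁.toMonoidHom = (MulAut.conj α₁).toMonoidHom.comp kernelBasis from
    DFunLike.congr_fun this x
  ext i
  fin_cases i <;> simp [kernelBasis]
  · exact (commute_α₀_α₁.inv_left.symm.mul_right (Commute.refl α₁)).mul_inv_cancel.symm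
  · exact commute_α₁_α₂.inv_left.eq
  · have hX : Commute α₂ (α₁ * (α₂⁻¹ * α₃) * α₁⁻¹) :=
      (commute_α₁_α₂.symm.mul_right ((Commute.refl α₂).inv_right.mul_right commute_α₂_α₃)).mul_right
        commute_α₁_α₂.symm.inv_right
    rw [← hX.inv_mul_cancel]
    group

lemma kernelBasis_conjα₁_zpow (k : ℤ) (x : F₃) :
    kernelBasis ((conjα₁ ^ k) x) = α₁ ^ k * kernelBasis x * (α₁ ^ k)⁻¹ := by
  induction k using Int.induction_on generalizing x with
  | zero => simp
  | succ k ih => rw [zpow_add_one, MulAut.mul_apply, ih, kernelBasis_conjα₁]; group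
  | pred k ih =>
    rw [zpow_sub_one, MulAut.mul_apply, ih, ← MulAut.apply_inv_self F₃ conjα₁ x,
      kernelBasis_conjα₁, MulAut.inv_apply_self]
    group

def ofFreeByCyclic : FreeByCyclic →* AP4 :=
  SemidirectProduct.lift kernelBasis (zpowersHom AP4 α₁) fun k => by
    ext x
    simp only [MonoidHom.comp_apply, MulEquiv.coe_toMonoidHom, zpowersHom_apply, MulAut.conj_apply]
    exact kernelBasis_conjα₁_zpow _ _

lemma ofFreeByCyclic_comp_toFreeByCyclic :
    ofFreeByCyclic.comp toFreeByCyclic = MonoidHom.id AP4 := by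
  refine PresentedGroup.ext fun i => ?_
  fin_cases i <;> simp [ofFreeByCyclic, toFreeByCyclic, kernelBasis]
  · exact commute_α₀_α₁.symm.inv_mul_cancel
  · exact commute_α₁_α₂.inv_mul_cancel
  · calc α₂⁻¹ * α₃ * (α₁⁻¹ * α₂) * α₁ = α₂⁻¹ * α₃ * (α₁⁻¹ * α₂ * α₁) := by group
      _ = α₃ := by rw [commute_α₁_α₂.inv_mul_cancel, commute_α₂_α₃.inv_mul_cancel]

lemma toFreeByCyclic_comp_ofFreeByCyclic :
    toFreeByCyclic.comp ofFreeByCyclic = MonoidHom.id FreeByCyclic := by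
  refine SemidirectProduct.hom_ext (FreeGroup.ext_hom _ _ fun i => ?_) (MonoidHom.ext_mint ?_)
  · fin_cases i <;>
      simp [ofFreeByCyclic, toFreeByCyclic, kernelBasis, SemidirectProduct.ext_iff]
  · simp [ofFreeByCyclic, toFreeByCyclic]

def freeByCyclicEquiv : FreeByCyclic ≃* AP4 :=
  MonoidHom.toMulEquiv ofFreeByCyclic toFreeByCyclic toFreeByCyclic_comp_ofFreeByCyclic
    ofFreeByCyclic_comp_toFreeByCyclic

end AP4

/-- A homomorphism `φ : A(P₄) → G` is injective if and only if the elements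
`φ(α⁻¹β)`, `φ(β⁻¹γ)`, `φ(γ⁻¹δ)` freely generate a free subgroup of rank 3 in `G`. -/
theorem AP4_hom_injective_iff {G : Type*} [Group G] (φ : AP4 →* G) :
    Function.Injective φ ↔
      Function.Injective
        (FreeGroup.lift (fun i : Fin 3 =>
          φ ((PresentedGroup.of (i.castSucc) : AP4)⁻¹ * PresentedGroup.of i.succ))) := by
  have hlift : FreeGroup.lift (fun i : Fin 3 =>
      φ ((PresentedGroup.of (i.castSucc) : AP4)⁻¹ * PresentedGroup.of i.succ))
      = (φ.comp AP4.freeByCyclicEquiv.toMonoidHom).comp inl := by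
    ext i
    simp [AP4.freeByCyclicEquiv, AP4.ofFreeByCyclic, AP4.kernelBasis]
  rw [hlift, ← MonoidHom.injective_iff_injective_comp_of_centralizer_eq_bot inl_injective
    AP4.centralizer_range_inl_eq_bot]
  exact (EquivLike.injective_comp AP4.freeByCyclicEquiv φ).symm
end

section
/- In the right-angled Artin group A(P₄) = ⟨α, β, γ, δ ∣ αβ = βα, βγ = γβ, γδ = δγ⟩, the subgroup ⟨β, γ⟩ is free abelian of rank 2, and the following intersection identities hold: α⟨β,γ⟩α⁻¹ ∩ ⟨β,γ⟩ = ⟨β⟩, ⟨β,γ⟩ ∩ δ⁻¹⟨β,γ⟩δ = ⟨γ⟩, and α⟨β,γ⟩α⁻¹ ∩ δ⁻¹⟨β,γ⟩δ = {1}. -/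
open scoped commutatorElement

/-!
Every element of `⟨β, γ⟩` is `β ^ m * γ ^ n`, and the homomorphism `A(P₄) → ℤ²` recording the
exponents of `β` and `γ` (killing `α` and `δ`) is injective on `⟨β, γ⟩`. Since `ℤ²` is abelian, `x`
and `g x g⁻¹` have the same image, so if both lie in `⟨β, γ⟩` they are equal: `g` commutes with `x`.
Two homomorphisms onto the infinite dihedral group, `α ↦ reflection, γ ↦ rotation` (`β, δ ↦ 1`) and
`δ ↦ reflection, β ↦ rotation` (`α, γ ↦ 1`), then show that `β ^ m * γ ^ n` commutes with `α` only
if `n = 0`, with `δ` only if `m = 0`, and with `δ α` only if `m = n = 0`.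
-/

open Subgroup

theorem DihedralGroup.commute_sr_r_iff {n : ℕ} (i j : ZMod n) :
    Commute (sr i) (r j) ↔ j + j = 0 := by
  rw [Commute, SemiconjBy, sr_mul_r, r_mul_sr, sr.injEq]
  constructor <;> intro h <;> linear_combination h

theorem Commute.mem_closure_pair_iff {G : Type*} [Group G] {x y : G} (h : Commute x y) {z : G} :
    z ∈ closure {x, y} ↔ ∃ m n : ℤ, x ^ m * y ^ n = z := by
  have hrange : closure {x, y} = ((zpowersHom G x).noncommCoprod (zpowersHom G y)
      fun m n => by simpa using h.zpow_zpow m.toAdd n.toAdd).range := by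
    rw [MonoidHom.noncommCoprod_range, range_zpowersHom, range_zpowersHom, zpowers_eq_closure,
      zpowers_eq_closure, ← Subgroup.closure_union, Set.singleton_union]
  simp [hrange, MonoidHom.noncommCoprod_apply]

theorem Commute.of_conj_mem_of_injOn {G A : Type*} [Group G] [CommGroup A] (φ : G →* A)
    {H : Subgroup G} (hφ : Set.InjOn φ H) {g x : G} (hx : x ∈ H) (hgx : g * x * g⁻¹ ∈ H) :
    Commute g x := by
  have : g * x * g⁻¹ = x := hφ hgx hx (by simp [mul_inv_cancel_comm])
  rwa [Commute, SemiconjBy, ← mul_inv_eq_iff_eq_mul]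

namespace AP4

open PresentedGroup DihedralGroup

section lift

variable {G : Type*} [Group G] {a b c d : G} (hab : Commute a b) (hbc : Commute b c)
  (hcd : Commute c d)

def lift : AP4 →* G :=
  toGroup (f := ![a, b, c, d]) <| by
    simp only [P4rels, Set.mem_insert_iff, Set.mem_singleton_iff]
    rintro r (rfl | rfl | rfl) <;> simp only [map_commutatorElement, FreeGroup.lift_apply_of,
      commutatorElement_eq_one_iff_mul_comm]
    exacts [hab.eq, hbc.eq, hcd.eq]

@[simp] theorem lift_of_zero : lift hab hbc hcd (of 0) = a := toGroup.of _
@[simp] theorem lift_of_one : lift hab hbc hcd (of 1) = b := toGroup.of _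
@[simp] theorem lift_of_two : lift hab hbc hcd (of 2) = c := toGroup.of _
@[simp] theorem lift_of_three : lift hab hbc hcd (of 3) = d := toGroup.of _

end lift

theorem commute_of_commutatorElement_mem {i j : Fin 4}
    (h : ⁅FreeGroup.of i, FreeGroup.of j⁆ ∈ P4rels) :
    Commute (of i : AP4) (of j) := by
  have := one_of_mem h
  rwa [map_commutatorElement, commutatorElement_eq_one_iff_mul_comm] at this

theorem commute_of_zero_of_one : Commute (of 0 : AP4) (of 1) :=
  commute_of_commutatorElement_mem (by simp [P4rels])

theorem commute_of_one_of_two : Commute (of 1 : AP4) (of 2) :=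
  commute_of_commutatorElement_mem (by simp [P4rels])

theorem commute_of_two_of_three : Commute (of 2 : AP4) (of 3) :=
  commute_of_commutatorElement_mem (by simp [P4rels])

def betaGamma (p : ℤ × ℤ) : AP4 := of 1 ^ p.1 * of 2 ^ p.2

def betaGammaExponents : AP4 →* Multiplicative (ℤ × ℤ) :=
  lift (a := 1) (d := 1) (Commute.all _ (.ofAdd (1, 0))) (.all _ (.ofAdd (0, 1))) (.all _ _)

def toDihedralAlphaGamma : AP4 →* DihedralGroup 0 :=
  lift (.one_right (sr 0)) (.one_left (r 1)) (.one_right _)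

def toDihedralBetaDelta : AP4 →* DihedralGroup 0 :=
  lift (.one_left (r 1)) (.one_right _) (.one_left (sr 0))

theorem betaGammaExponents_betaGamma (p : ℤ × ℤ) :
    betaGammaExponents (betaGamma p) = .ofAdd p := by
  simp [betaGamma, betaGammaExponents, ← ofAdd_zsmul, ← ofAdd_add]

theorem toDihedralAlphaGamma_betaGamma (p : ℤ × ℤ) :
    toDihedralAlphaGamma (betaGamma p) = r p.2 := by
  simp only [toDihedralAlphaGamma, betaGamma, map_mul, map_zpow, lift_of_one, lift_of_two,
    one_zpow, one_mul, r_zpow]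
  rfl -- the cast `ℤ → ZMod 0` is the identity

theorem toDihedralBetaDelta_betaGamma (p : ℤ × ℤ) :
    toDihedralBetaDelta (betaGamma p) = r p.1 := by
  simp only [toDihedralBetaDelta, betaGamma, map_mul, map_zpow, lift_of_one, lift_of_two,
    one_zpow, one_mul, mul_one, r_zpow]
  rfl

theorem betaGamma_injective : Function.Injective betaGamma :=
  fun p q h => by simpa [betaGammaExponents_betaGamma] using congrArg betaGammaExponents h

local notation "H" => closure {(of 1 : AP4), of 2}

theorem mem_closure_iff_exists_betaGamma {x : AP4} : x ∈ H ↔ ∃ p, betaGamma p = x := by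
  simp [commute_of_one_of_two.mem_closure_pair_iff, betaGamma]

theorem injOn_betaGammaExponents : Set.InjOn betaGammaExponents H := by
  rintro x hx y hy h
  obtain ⟨p, rfl⟩ := mem_closure_iff_exists_betaGamma.1 hx
  obtain ⟨q, rfl⟩ := mem_closure_iff_exists_betaGamma.1 hy
  simp_all [betaGammaExponents_betaGamma]

theorem commute_of_conj_mem {g x : AP4} (hx : x ∈ H) (hgx : g * x * g⁻¹ ∈ H) : Commute g x :=
  .of_conj_mem_of_injOn betaGammaExponents injOn_betaGammaExponents hx hgx

theorem snd_eq_zero_of_commute_betaGamma {g : AP4} (hg : toDihedralAlphaGamma g = sr 0)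
    {p : ℤ × ℤ} (h : Commute g (betaGamma p)) : p.2 = 0 := by
  have : p.2 + p.2 = 0 := (commute_sr_r_iff (n := 0) 0 p.2).1 <| by
    simpa [hg, toDihedralAlphaGamma_betaGamma] using h.map toDihedralAlphaGamma
  omega

theorem fst_eq_zero_of_commute_betaGamma {g : AP4} (hg : toDihedralBetaDelta g = sr 0)
    {p : ℤ × ℤ} (h : Commute g (betaGamma p)) : p.1 = 0 := by
  have : p.1 + p.1 = 0 := (commute_sr_r_iff (n := 0) 0 p.1).1 <| by
    simpa [hg, toDihedralBetaDelta_betaGamma] using h.map toDihedralBetaDelta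
  omega

theorem map_conj_of_zero_inf_eq_zpowers :
    map (MulAut.conj (of 0)).toMonoidHom H ⊓ H = zpowers (of 1) := by
  refine le_antisymm ?_ <|
    zpowers_le.2 ⟨⟨of 1, subset_closure (by simp), ?_⟩, subset_closure (by simp)⟩
  · rintro - ⟨⟨y, hy, rfl⟩, hx⟩
    obtain ⟨p, rfl⟩ := mem_closure_iff_exists_betaGamma.1 hy
    have hcomm := commute_of_conj_mem hy hx
    have hp : p.2 = 0 := snd_eq_zero_of_commute_betaGamma (by simp [toDihedralAlphaGamma]) hcomm
    rw [MulEquiv.coe_toMonoidHom, MulAut.conj_apply, hcomm.mul_inv_cancel]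
    exact ⟨p.1, by simp [betaGamma, hp]⟩
  · simp [commute_of_zero_of_one.mul_inv_cancel]

theorem inf_map_conj_of_three_inv_eq_zpowers :
    H ⊓ map (MulAut.conj (of 3)⁻¹).toMonoidHom H = zpowers (of 2) := by
  refine le_antisymm ?_ <|
    zpowers_le.2 ⟨subset_closure (by simp), of 2, subset_closure (by simp), ?_⟩
  · rintro - ⟨hx, y, hy, rfl⟩
    obtain ⟨p, rfl⟩ := mem_closure_iff_exists_betaGamma.1 hy
    have hcomm := commute_of_conj_mem hy hx
    have hp : p.1 = 0 := fst_eq_zero_of_commute_betaGamma (by simp [toDihedralBetaDelta]) hcomm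
    rw [MulEquiv.coe_toMonoidHom, MulAut.conj_apply, hcomm.mul_inv_cancel]
    exact ⟨p.2, by simp [betaGamma, hp]⟩
  · simpa using commute_of_two_of_three.symm.inv_left.mul_inv_cancel

theorem map_conj_of_zero_inf_map_conj_of_three_inv_eq_bot :
    map (MulAut.conj (of 0)).toMonoidHom H ⊓ map (MulAut.conj (of 3)⁻¹).toMonoidHom H = ⊥ := by
  rw [eq_bot_iff]
  rintro - ⟨⟨y, hy, rfl⟩, z, hz, hzy⟩
  obtain ⟨p, rfl⟩ := mem_closure_iff_exists_betaGamma.1 hy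
  simp only [MulEquiv.coe_toMonoidHom, MulAut.conj_apply, inv_inv] at hzy ⊢
  have hz' : z = of 3 * of 0 * betaGamma p * (of 3 * of 0)⁻¹ := by
    calc z = of 3 * ((of 3)⁻¹ * z * of 3) * (of 3)⁻¹ := by group
      _ = _ := by rw [hzy]; group
  have hcomm := commute_of_conj_mem hy (hz' ▸ hz)
  have hp₁ : p.1 = 0 := fst_eq_zero_of_commute_betaGamma (by simp [toDihedralBetaDelta]) hcomm
  have hp₂ : p.2 = 0 := snd_eq_zero_of_commute_betaGamma (by simp [toDihedralAlphaGamma]) hcomm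
  simp [betaGamma, hp₁, hp₂]

end AP4

/-- In `A(P₄) = ⟨α,β,γ,δ⟩`: the subgroup `⟨β,γ⟩` is free abelian of rank 2 (expressed by
injectivity of `(m,n) ↦ β^m γ^n` on `ℤ²`), and
`α⟨β,γ⟩α⁻¹ ∩ ⟨β,γ⟩ = ⟨β⟩`, `⟨β,γ⟩ ∩ δ⁻¹⟨β,γ⟩δ = ⟨γ⟩`,
`α⟨β,γ⟩α⁻¹ ∩ δ⁻¹⟨β,γ⟩δ = {1}`. -/
theorem AP4_intersections :
    ∀ (a b c d : AP4), a = PresentedGroup.of 0 → b = PresentedGroup.of 1 →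
      c = PresentedGroup.of 2 → d = PresentedGroup.of 3 →
      (Function.Injective fun p : ℤ × ℤ => b ^ p.1 * c ^ p.2) ∧
      (Subgroup.closure {b, c}).map (MulAut.conj a).toMonoidHom ⊓ Subgroup.closure {b, c} =
        Subgroup.zpowers b ∧
      Subgroup.closure {b, c} ⊓ (Subgroup.closure {b, c}).map (MulAut.conj d⁻¹).toMonoidHom =
        Subgroup.zpowers c ∧
      (Subgroup.closure {b, c}).map (MulAut.conj a).toMonoidHom ⊓
        (Subgroup.closure {b, c}).map (MulAut.conj d⁻¹).toMonoidHom = ⊥ := by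
  rintro _ _ _ _ rfl rfl rfl rfl
  exact ⟨AP4.betaGamma_injective, AP4.map_conj_of_zero_inf_eq_zpowers,
    AP4.inf_map_conj_of_three_inv_eq_zpowers, AP4.map_conj_of_zero_inf_map_conj_of_three_inv_eq_bot⟩
end

section
/- Let H be a free group and h₁, …, h_k ∈ H be non-trivial elements such that ⟨h_i⟩ ∩ ⟨h_j⟩ = {1} for all i < j. Then there exists r ∈ ℕ such that h₁^r, …, h_k^r freely generate a free subgroup of rank k in H. -/
/-!
Write `g.toWord = U C U⁻¹` with `C` cyclically reduced, so that the reduced word of `g ^ n`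
(`n > 0`) is `U Cⁿ U⁻¹` and these words converge to the ray `U C C C ⋯`. If two nontrivial
elements have the same ray, that ray is eventually periodic, and reading a common period off it
shows that the two elements have commensurable powers. Free groups being torsion-free, the
hypothesis on the cyclic subgroups rules this out for any two of the `h i`, `(h i)⁻¹`, so for
large `N` the first `N` letters of these `2k` rays are pairwise distinct. The sets of elements whose
reduced words begin with these prefixes are then ping-pong sets for the `h i ^ (2 * N)`: in
`h i ^ (2 * N) * v` fewer than `N` letters cancel unless `v` begins like the ray of `(h i)⁻¹`.
-/

open List Filter
open scoped Pointwise

namespace Stream'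

variable {β : Type*}

theorem take_cycle_mul_length (l : List β) (hl : l ≠ []) (m : ℕ) :
    (cycle l hl).take (m * l.length) = (replicate m l).flatten := by
  induction m with
  | zero => simp
  | succ m ih =>
    rw [Nat.succ_mul, Nat.add_comm, cycle_eq l hl, ← append_take, ih,
      replicate_succ, flatten_cons]

theorem get_cycle_add_length (l : List β) (hl : l ≠ []) (n : ℕ) :
    (cycle l hl).get (n + l.length) = (cycle l hl).get n := by
  conv_lhs => rw [cycle_eq l hl, Nat.add_comm, get_append_right]

theorem get_cycle_add_mul_length (l : List β) (hl : l ≠ []) (n k : ℕ) :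
    (cycle l hl).get (n + k * l.length) = (cycle l hl).get n := by
  induction k with
  | zero => simp
  | succ k ih => rw [Nat.succ_mul, ← Nat.add_assoc, get_cycle_add_length, ih]

theorem eventually_take_ne {s s' : Stream' β} (h : s ≠ s') :
    ∀ᶠ N in atTop, s.take N ≠ s'.take N := by
  obtain ⟨n, hn⟩ : ∃ n, s.get n ≠ s'.get n := by
    by_contra! h'
    exact h (Stream'.ext h')
  filter_upwards [eventually_gt_atTop n] with N hN hs
  exact hn (by simpa [getElem?_take hN] using congrArg (·[n]?) hs)

end Stream'

theorem mul_inv_add_eq_of_periodic {G : Type*} [Group G] {z ρ : ℕ → G}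
    (hz : ∀ n, z (n + 1) = z n * ρ n) {L N₀ : ℕ} (hρ : ∀ n ≥ N₀, ρ (n + L) = ρ n) {n : ℕ}
    (hn : N₀ ≤ n) : z (n + L) * (z n)⁻¹ = z (N₀ + L) * (z N₀)⁻¹ := by
  induction n, hn using Nat.le_induction with
  | base => rfl
  | succ n hn ih =>
    rw [Nat.add_right_comm, hz, hz, hρ n hn, mul_inv_rev, mul_assoc, mul_inv_cancel_left, ih]

namespace FreeGroup

universe u

variable {α : Type u}

theorem injective_lift_of_ping_pong_of_small {ι : Type*} [Small.{u} ι] [Nontrivial ι]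
    {G : Type u} [Group G] (a : ι → G) {β : Type*} [MulAction G β] (X Y : ι → Set β)
    (hXne : ∀ i, (X i).Nonempty) (hXdisj : Pairwise fun i j => Disjoint (X i) (X j))
    (hYdisj : Pairwise fun i j => Disjoint (Y i) (Y j)) (hXYdisj : ∀ i j, Disjoint (X i) (Y j))
    (hX : ∀ i, a i • (Y i)ᶜ ⊆ X i) (hY : ∀ i, (a i)⁻¹ • (X i)ᶜ ⊆ Y i) :
    Function.Injective (lift a) := by
  let e := equivShrink ι
  have := e.symm.nontrivial
  have hcomp : lift a = (lift (a ∘ e.symm)).comp (freeGroupCongr e) := by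
    ext i
    simp
  rw [hcomp]
  exact (injective_lift_of_ping_pong (a ∘ e.symm) (X ∘ e.symm) (Y ∘ e.symm) (fun i => hXne _)
    (fun i j hij => hXdisj (e.symm.injective.ne hij))
    (fun i j hij => hYdisj (e.symm.injective.ne hij)) (fun i j => hXYdisj _ _) (fun i => hX _)
    (fun i => hY _)).comp (freeGroupCongr e).injective

theorem IsReduced.exists_reduce_append [DecidableEq α] {s t : List (α × Bool)}
    (hs : IsReduced s) (ht : IsReduced t) :
    ∃ s₁ d t₁, s = s₁ ++ d ∧ t = invRev d ++ t₁ ∧ reduce (s ++ t) = s₁ ++ t₁ := by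
  induction s using List.reverseRecOn generalizing t with
  | nil => exact ⟨[], [], t, rfl, rfl, ht.reduce_eq⟩
  | append_singleton s x ih =>
    cases t with
    | nil => exact ⟨s ++ [x], [], [], by simp, rfl, by simpa using hs.reduce_eq⟩
    | cons y t =>
      by_cases hxy : y = (x.1, !x.2)
      · obtain ⟨s₁, d, t₁, rfl, rfl, hst⟩ :=
          ih (t := t) (hs.infix ⟨[], [x], rfl⟩) (ht.infix ⟨[y], [], by simp⟩)
        refine ⟨s₁, d ++ [x], t₁, by simp, by simp [hxy, invRev], ?_⟩
        rw [hxy, append_assoc, singleton_append, ← hst]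
        exact reduce.Step.eq Red.Step.not
      · refine ⟨s ++ [x], [], y :: t, by simp, rfl, IsReduced.reduce_eq ?_⟩
        refine hs.append_overlap (isReduced_cons_cons.2 ⟨fun h => ?_, ht⟩) (cons_ne_nil x [])
        obtain ⟨a, b⟩ := x
        obtain ⟨c, d⟩ := y
        cases b <;> cases d <;> simp_all

open reduceCyclically

section
variable [DecidableEq α] {g : FreeGroup α} {N n : ℕ}

theorem toWord_pow_of_ne_zero (g : FreeGroup α) (hn : n ≠ 0) :
    (g ^ n).toWord = conjugator g.toWord ++ (replicate n (reduceCyclically g.toWord)).flatten ++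
      invRev (conjugator g.toWord) := by
  rw [toWord_pow, reduce_flatten_replicate isReduced_toWord, if_neg hn]

theorem mk_conjugator_mul_mk_reduceCyclically (g : FreeGroup α) :
    mk (conjugator g.toWord) * mk (reduceCyclically g.toWord) * (mk (conjugator g.toWord))⁻¹ =
      g := by
  rw [inv_mk, mul_mk, mul_mk, conj_conjugator_reduceCyclically, mk_toWord]

theorem reduceCyclically_toWord_ne_nil (hg : g ≠ 1) : reduceCyclically g.toWord ≠ [] := by
  intro hC
  have hsq : (g ^ 2).toWord = g.toWord := by
    conv_rhs => rw [← conj_conjugator_reduceCyclically g.toWord]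
    simp [toWord_pow_of_ne_zero g two_ne_zero, hC]
  rw [toWord_inj, pow_two, mul_eq_left] at hsq
  exact hg hsq

theorem le_length_toWord_pow (hg : g ≠ 1) (n : ℕ) : n ≤ (g ^ n).toWord.length := by
  rcases eq_or_ne n 0 with rfl | hn
  · exact Nat.zero_le _
  have := List.length_pos_iff.2 (reduceCyclically_toWord_ne_nil hg)
  rw [toWord_pow_of_ne_zero g hn]
  simp only [length_append, length_flatten, map_replicate, sum_replicate, smul_eq_mul,
    invRev_length]
  nlinarith

/-- For `g.toWord = U ++ C ++ invRev U` with `C` cyclically reduced, the infinite word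
`U C C C ⋯`, whose prefixes are those of the reduced words of the powers of `g`. -/
def ray (g : FreeGroup α) (hg : g ≠ 1) : Stream' (α × Bool) :=
  conjugator g.toWord ++ₛ Stream'.cycle (reduceCyclically g.toWord)
    (reduceCyclically_toWord_ne_nil hg)

theorem take_ray (hg : g ≠ 1) (m : ℕ) :
    (ray g hg).take ((conjugator g.toWord).length + m * (reduceCyclically g.toWord).length) =
      conjugator g.toWord ++ (replicate m (reduceCyclically g.toWord)).flatten := by
  rw [ray, ← Stream'.append_take, Stream'.take_cycle_mul_length]

theorem take_toWord_pow (hg : g ≠ 1) (hN : N ≤ n) :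
    (g ^ n).toWord.take N = (ray g hg).take N := by
  rcases eq_or_ne n 0 with rfl | hn
  · simp [Nat.le_zero.1 hN]
  have hlen : N ≤ (conjugator g.toWord).length + n * (reduceCyclically g.toWord).length := by
    have := List.length_pos_iff.2 (reduceCyclically_toWord_ne_nil hg)
    nlinarith
  rw [toWord_pow_of_ne_zero g hn, take_append_of_le_length (by simpa using hlen), ← take_ray hg,
    Stream'.take_take, min_eq_right hlen]

theorem isReduced_take_ray (hg : g ≠ 1) (N : ℕ) : IsReduced ((ray g hg).take N) := by
  rw [← take_toWord_pow hg le_rfl]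
  exact isReduced_toWord.infix (take_prefix N _).isInfix

theorem mk_take_ray_mul_inv (hg : g ≠ 1) (m k : ℕ) :
    mk ((ray g hg).take
        ((conjugator g.toWord).length + (m + k) * (reduceCyclically g.toWord).length)) *
      (mk ((ray g hg).take
        ((conjugator g.toWord).length + m * (reduceCyclically g.toWord).length)))⁻¹ = g ^ k := by
  rw [take_ray, take_ray, ← mul_mk, ← mul_mk, ← pow_mk, ← pow_mk]
  conv_rhs => rw [← mk_conjugator_mul_mk_reduceCyclically g]
  rw [conj_pow, pow_add]
  group

theorem get_ray_add_mul_length (hg : g ≠ 1) {n : ℕ} (hn : (conjugator g.toWord).length ≤ n)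
    (k : ℕ) :
    (ray g hg).get (n + k * (reduceCyclically g.toWord).length) = (ray g hg).get n := by
  obtain ⟨n, rfl⟩ := Nat.exists_eq_add_of_le hn
  rw [ray, Nat.add_assoc, Stream'.get_append_right, Stream'.get_append_right,
    Stream'.get_cycle_add_mul_length]

theorem exists_pow_eq_pow_of_ray_eq {g' : FreeGroup α} (hg : g ≠ 1) (hg' : g' ≠ 1)
    (h : ray g hg = ray g' hg') : ∃ m n : ℕ, 0 < m ∧ 0 < n ∧ g ^ m = g' ^ n := by
  have hpow := mk_take_ray_mul_inv hg
  have hpow' := mk_take_ray_mul_inv hg'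
  have hper := @get_ray_add_mul_length _ _ g hg
  have hℓ := List.length_pos_iff.2 (reduceCyclically_toWord_ne_nil hg)
  have hℓ' := List.length_pos_iff.2 (reduceCyclically_toWord_ne_nil hg')
  rw [← h] at hpow'
  set u := (conjugator g.toWord).length
  set ℓ := (reduceCyclically g.toWord).length
  set u' := (conjugator g'.toWord).length
  set ℓ' := (reduceCyclically g'.toWord).length
  set z : ℕ → FreeGroup α := fun n => mk ((ray g hg).take n)
  -- the ray is `ℓ' * ℓ`-periodic beyond position `u`, and both powers are read off a period
  have hconst : ∀ n ≥ u, z (n + ℓ' * ℓ) * (z n)⁻¹ = z (u + ℓ' * ℓ) * (z u)⁻¹ :=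
    fun n hn => mul_inv_add_eq_of_periodic (ρ := fun n => mk [(ray g hg).get n])
      (fun n => by simp only [z, Stream'.take_succ', mul_mk]) (fun n hn => by rw [hper hn]) hn
  refine ⟨ℓ', ℓ, hℓ', hℓ, ?_⟩
  calc g ^ ℓ' = z (u + ℓ' * ℓ) * (z u)⁻¹ := by
        rw [← hpow 0 ℓ', Nat.zero_add, Nat.zero_mul, Nat.add_zero]
    _ = z (u' + u * ℓ' + ℓ' * ℓ) * (z (u' + u * ℓ'))⁻¹ := (hconst _ (by nlinarith)).symm
    _ = g' ^ ℓ := by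
      rw [← hpow' u ℓ, show u' + (u + ℓ) * ℓ' = u' + u * ℓ' + ℓ' * ℓ by ring]

theorem ray_ne_ray_inv (hg : g ≠ 1) : ray g hg ≠ ray g⁻¹ (inv_ne_one.2 hg) := by
  intro h
  obtain ⟨m, n, hm, -, hmn⟩ := exists_pow_eq_pow_of_ray_eq hg _ h
  rw [inv_pow, eq_inv_iff_mul_eq_one, ← pow_add, pow_eq_one_iff_left (by omega)] at hmn
  exact hg hmn

theorem take_ray_prefix_toWord_pow_mul (hg : g ≠ 1) {v : FreeGroup α}
    (hv : ¬ (ray g⁻¹ (inv_ne_one.2 hg)).take N <+: v.toWord) :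
    (ray g hg).take N <+: (g ^ (2 * N) * v).toWord := by
  obtain ⟨s, d, t, hs, ht, hst⟩ :=
    (isReduced_toWord (x := g ^ (2 * N))).exists_reduce_append (isReduced_toWord (x := v))
  -- a cancelled part of length `≥ N` would make `v` begin like the ray of `g⁻¹`
  have hd : d.length < N := by
    by_contra! hd
    obtain ⟨d', hd'⟩ : invRev d <+: (g⁻¹ ^ (2 * N)).toWord := by
      rw [inv_pow, toWord_inv, hs, invRev_append]
      exact prefix_append _ _
    apply hv
    rw [← take_toWord_pow _ (by omega : N ≤ 2 * N), ← hd', take_append_of_le_length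
      (by simpa using hd), ht]
    exact (take_prefix _ _).trans (prefix_append _ _)
  have hs_len : N ≤ s.length := by
    have := le_length_toWord_pow hg (2 * N)
    rw [hs, length_append] at this
    omega
  rw [toWord_mul, hst, ← take_toWord_pow hg (by omega : N ≤ 2 * N), hs,
    take_append_of_le_length hs_len]
  exact (take_prefix _ _).trans (prefix_append _ _)

theorem exists_injective_lift_pow_of_ray_ne {ι : Type*} [Finite ι] [Nontrivial ι]
    (a : ι → FreeGroup α) (ha : ∀ i, a i ≠ 1)
    (hX : Pairwise fun i j => ray (a i) (ha i) ≠ ray (a j) (ha j))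
    (hY : Pairwise fun i j =>
      ray (a i)⁻¹ (inv_ne_one.2 (ha i)) ≠ ray (a j)⁻¹ (inv_ne_one.2 (ha j)))
    (hXY : ∀ i j, ray (a i) (ha i) ≠ ray (a j)⁻¹ (inv_ne_one.2 (ha j))) :
    ∃ r, 0 < r ∧ Function.Injective (lift fun i => a i ^ r) := by
  obtain ⟨N, hN, hNX, hNY, hNXY⟩ : ∃ N, 0 < N ∧
      (∀ i j, i ≠ j → (ray (a i) (ha i)).take N ≠ (ray (a j) (ha j)).take N) ∧
      (∀ i j, i ≠ j → (ray (a i)⁻¹ (inv_ne_one.2 (ha i))).take N ≠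
        (ray (a j)⁻¹ (inv_ne_one.2 (ha j))).take N) ∧
      ∀ i j, (ray (a i) (ha i)).take N ≠ (ray (a j)⁻¹ (inv_ne_one.2 (ha j))).take N := by
    refine ((eventually_gt_atTop 0).and ((?_ : ∀ᶠ N in atTop, _).and (.and ?_ ?_))).exists <;>
      simp only [eventually_all]
    exacts [fun i j hij => Stream'.eventually_take_ne (hX hij),
      fun i j hij => Stream'.eventually_take_ne (hY hij),
      fun i j => Stream'.eventually_take_ne (hXY i j)]
  have hdisj : ∀ {l l' : List (α × Bool)}, l.length = l'.length → l ≠ l' →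
      Disjoint {w : FreeGroup α | l <+: w.toWord} {w | l' <+: w.toWord} :=
    fun hl hne => Set.disjoint_left.2 fun w hw hw' =>
      hne ((prefix_of_prefix_length_le hw hw' hl.le).eq_of_length hl)
  refine ⟨2 * N, by omega, injective_lift_of_ping_pong_of_small _
    (fun i => {w | (ray (a i) (ha i)).take N <+: w.toWord})
    (fun i => {w | (ray (a i)⁻¹ (inv_ne_one.2 (ha i))).take N <+: w.toWord})
    (fun i => ⟨mk ((ray (a i) (ha i)).take N), ?_⟩)
    (fun i j hij => hdisj (by simp) (hNX i j hij)) (fun i j hij => hdisj (by simp) (hNY i j hij))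
    (fun i j => hdisj (by simp) (hNXY i j)) (fun i => ?_) (fun i => ?_)⟩
  · simp only [Set.mem_ofPred_eq, toWord_mk, (isReduced_take_ray _ N).reduce_eq, prefix_refl]
  · rintro _ ⟨v, hv, rfl⟩
    exact take_ray_prefix_toWord_pow_mul (ha i) hv
  · rintro _ ⟨v, hv, rfl⟩
    show _ <+: ((a i ^ (2 * N))⁻¹ * v).toWord
    rw [← inv_pow]
    refine take_ray_prefix_toWord_pow_mul (inv_ne_one.2 (ha i)) ?_
    rw [Set.mem_compl_iff, Set.mem_ofPred_eq] at hv
    convert hv using 4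
    exact inv_inv _

end

theorem injective_lift_of_subsingleton {G ι : Type*} [Group G] [IsMulTorsionFree G]
    [Subsingleton ι] (a : ι → G) (ha : ∀ i, a i ≠ 1) : Function.Injective (lift a) := by
  rcases isEmpty_or_nonempty ι with hι | ⟨⟨i⟩⟩
  · exact Function.injective_of_subsingleton _
  let _ : Unique ι := uniqueOfSubsingleton i
  have hlift : lift a = (zpowersHom G (a i)).comp (mulEquivIntOfUnique (α := ι)).toMonoidHom := by
    ext j
    simp [Subsingleton.elim j i, mulEquivIntOfUnique, equivIntOfUnique]
  rw [hlift, MonoidHom.coe_comp]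
  refine Function.Injective.comp (fun m n hmn => ?_) (mulEquivIntOfUnique (α := ι)).injective
  rw [zpowersHom_apply, zpowersHom_apply] at hmn
  exact Multiplicative.toAdd.injective
    (injective_zpow_iff_not_isOfFinOrder.2 (by rw [isOfFinOrder_iff_eq_one]; exact ha i) hmn)

theorem exists_injective_lift_pow {ι : Type*} [Finite ι] (a : ι → FreeGroup α)
    (ha : ∀ i, a i ≠ 1)
    (hint : Pairwise fun i j => Subgroup.zpowers (a i) ⊓ Subgroup.zpowers (a j) = ⊥) :
    ∃ r, 0 < r ∧ Function.Injective (lift fun i => a i ^ r) := by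
  classical
  rcases subsingleton_or_nontrivial ι with hι | hι
  · exact ⟨1, one_pos, by simpa using injective_lift_of_subsingleton a ha⟩
  have hsame : ∀ {i j x y} (hx : x ≠ 1) (hy : y ≠ 1), x ∈ Subgroup.zpowers (a i) →
      y ∈ Subgroup.zpowers (a j) → ray x hx = ray y hy → i = j := by
    intro i j x y hx hy hxi hyj hxy
    by_contra hij
    obtain ⟨m, n, hm, -, hmn⟩ := exists_pow_eq_pow_of_ray_eq hx hy hxy
    have hmem : x ^ m ∈ Subgroup.zpowers (a i) ⊓ Subgroup.zpowers (a j) :=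
      ⟨pow_mem hxi m, hmn ▸ pow_mem hyj n⟩
    rw [hint hij, Subgroup.mem_bot, pow_eq_one_iff_left hm.ne'] at hmem
    exact hx hmem
  apply exists_injective_lift_pow_of_ray_ne a ha
  · exact fun i j hij h => hij (hsame _ _ (Subgroup.mem_zpowers _) (Subgroup.mem_zpowers _) h)
  · exact fun i j hij h => hij (hsame _ _ (inv_mem (Subgroup.mem_zpowers _))
      (inv_mem (Subgroup.mem_zpowers _)) h)
  · intro i j h
    obtain rfl := hsame _ _ (Subgroup.mem_zpowers _) (inv_mem (Subgroup.mem_zpowers _)) h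
    exact ray_ne_ray_inv _ h

end FreeGroup

/-- If `h₁, …, h_k` are non-trivial elements of a free group `H` whose cyclic subgroups
pairwise intersect trivially, then there is `r ∈ ℕ` such that `h₁^r, …, h_k^r` freely
generate a free subgroup of rank `k`. -/
theorem free_group_large_powers {H : Type*} [Group H] [IsFreeGroup H]
    (k : ℕ) (h : Fin k → H) (hne : ∀ i, h i ≠ 1)
    (hint : ∀ i j : Fin k, i < j → Subgroup.zpowers (h i) ⊓ Subgroup.zpowers (h j) = ⊥) :
    ∃ r : ℕ, 0 < r ∧
      Function.Injective (FreeGroup.lift (fun i : Fin k => h i ^ r)) := by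
  have hpair : Pairwise fun i j => Subgroup.zpowers (h i) ⊓ Subgroup.zpowers (h j) = ⊥ :=
    fun i j hij => hij.lt_or_gt.elim (hint i j) fun hji =>
      (inf_comm _ _).trans (hint j i hji)
  let e := (IsFreeGroup.toFreeGroup H).toMonoidHom
  have he : Function.Injective e := (IsFreeGroup.toFreeGroup H).injective
  obtain ⟨r, hr, hinj⟩ := FreeGroup.exists_injective_lift_pow (fun i => e (h i))
    (fun i => (map_ne_one_iff e he).2 (hne i)) fun i j hij => by
      dsimp only
      rw [← e.map_zpowers, ← e.map_zpowers, ← Subgroup.map_inf _ _ _ he, hpair hij,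
        Subgroup.map_bot]
  have hcomp : e.comp (FreeGroup.lift fun i => h i ^ r) = FreeGroup.lift fun i => e (h i) ^ r := by
    ext i
    simp
  refine ⟨r, hr, Function.Injective.of_comp (f := e) ?_⟩
  rwa [← MonoidHom.coe_comp, hcomp]
end

section
/- Let G be a group generated by subgroups G₁ and G₂, with H = G₁ ∩ G₂ a proper subgroup of both, and [G_i : H] ≥ 3 for some i. Suppose G acts on a set Ω and there exist disjoint non-empty subsets Ω₁, Ω₂ ⊆ Ω such that g_i·Ω_j ⊆ Ω_i for i ≠ j and all g_i ∈ G_i \ H, and h·Ω_i ⊆ Ω_i for i = 1, 2 and all h ∈ H. Then the natural homomorphism from the amalgamated free product G₁ *_H G₂ to G is an isomorphism. -/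
/-!
Every element of `G₁ *_H G₂` has a normal form `h g₁ ⋯ gₙ` with `h ∈ H` and letters
`gₖ ∈ G_{iₖ} \ H` from alternating factors; absorbing `h` into `g₁`, injectivity reduces to
showing that no nonempty such word maps to `1` in `G`. A word whose first and last letters lie
in the same factor `G_i` maps `Ω_j` (`j ≠ i`) into the disjoint set `Ω_i`, so it is not `1`.
A word running from `G_i` to `G_j ≠ G_i` is conjugated by some `t ∈ G_i` avoiding the two
cosets `H` and `H g₁⁻¹`, which exists as `[G_i : H] ≥ 3`, into a word of the first kind
(after inverting the word if the index condition holds on the other side).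
-/

open Function

theorem Subgroup.IsComplement.eq_one_of_mem_of_mem {K : Type*} [Group K] {S T : Set K}
    (hST : Subgroup.IsComplement S T) (hS : 1 ∈ S) (hT : 1 ∈ T) {g : K} (hgS : g ∈ S)
    (hgT : g ∈ T) : g = 1 :=
  congrArg Subtype.val <| (hST.equiv_snd_eq_self_of_mem_of_one_mem hS hgT).symm.trans
    (hST.equiv_snd_eq_one_of_mem_of_one_mem hT hgS)

theorem Subgroup.exists_notMem_and_mul_notMem {K : Type*} [Group K] {N : Subgroup K}
    (hN : 3 ≤ N.index ∨ N.index = 0) (a : K) : ∃ t, t ∉ N ∧ t * a ∉ N := by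
  by_contra! hcon
  have hsurj : Surjective fun b : Bool => ((cond b 1 a : K) : K ⧸ N) := by
    intro q
    induction q using QuotientGroup.induction_on with
    | H s =>
      by_cases hs : s⁻¹ ∈ N
      · exact ⟨true, QuotientGroup.eq.mpr (by simpa using hs)⟩
      · exact ⟨false, QuotientGroup.eq.mpr (by simpa using inv_mem (hcon _ hs))⟩
  have : Finite (K ⧸ N) := Finite.of_surjective _ hsurj
  have hle : N.index ≤ 2 := by
    simpa [Subgroup.index] using Nat.card_le_card_of_surjective _ hsurj
  have := N.index_ne_zero_of_finite
  omega

namespace Monoid.PushoutI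

open CoprodI

variable {ι : Type*} {G : ι → Type*} [∀ i, Group (G i)] {H : Type*} [Group H]
  {φ : ∀ i, H →* G i}

theorem NormalWord.reduced {d : NormalWord.Transversal φ} (w : NormalWord d) :
    Reduced φ w.toWord := by
  rintro ⟨i, g⟩ hg hgφ
  exact w.ne_one _ hg <|
    (d.compl i).eq_one_of_mem_of_mem (one_mem _) (d.one_mem i) hgφ (w.normalized i _ hg)

theorem exists_reduced_word_base_mul_eq (hφ : ∀ i, Injective (φ i)) (x : PushoutI φ) :
    ∃ (h : H) (w : Word G), Reduced φ w ∧ base φ h * ofCoprodI w.prod = x := by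
  classical
  obtain ⟨d⟩ := NormalWord.transversal_nonempty φ hφ
  let w : NormalWord d := NormalWord.equiv x
  exact ⟨w.head, w.toWord, w.reduced, NormalWord.equiv.symm_apply_apply x⟩

theorem lift_comp_ofCoprodI {K : Type*} [Group K] (f : ∀ i, G i →* K) (k : H →* K)
    (hf : ∀ i, (f i).comp (φ i) = k) : (lift f k hf).comp ofCoprodI = CoprodI.lift f :=
  CoprodI.ext_hom _ _ fun i => by ext; simp

theorem reduced_neWord_append {i j k l : ι} {w₁ : NeWord G i j} {hne : j ≠ k}
    {w₂ : NeWord G k l} :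
    Reduced φ (w₁.append hne w₂).toWord ↔ Reduced φ w₁.toWord ∧ Reduced φ w₂.toWord := by
  simp [Reduced, NeWord.toWord, NeWord.toList, or_imp, forall_and]

theorem reduced_neWord_singleton {i : ι} {x : G i} {hx : x ≠ 1} :
    Reduced φ (NeWord.singleton x hx).toWord ↔ x ∉ (φ i).range := by
  simp [Reduced, NeWord.toWord, NeWord.toList]

theorem Reduced.neWord_replaceHead {i j : ι} {w : NeWord G i j} (hw : Reduced φ w.toWord)
    {x : G i} (hx : x ≠ 1) (hxφ : x ∉ (φ i).range) : Reduced φ (w.replaceHead x hx).toWord := by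
  induction w with
  | singleton => exact reduced_neWord_singleton.mpr hxφ
  | append w₁ hne w₂ ih₁ _ =>
    rw [reduced_neWord_append] at hw
    exact reduced_neWord_append.mpr ⟨ih₁ hw.1 hx hxφ, hw.2⟩

theorem Reduced.neWord_inv {i j : ι} {w : NeWord G i j} (hw : Reduced φ w.toWord) :
    Reduced φ w.inv.toWord := by
  induction w with
  | singleton x hx =>
    rw [reduced_neWord_singleton] at hw
    exact reduced_neWord_singleton.mpr fun hinv => hw (by simpa using inv_mem hinv)
  | append w₁ hne w₂ ih₁ ih₂ =>
    rw [reduced_neWord_append] at hw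
    exact reduced_neWord_append.mpr ⟨ih₂ hw.2, ih₁ hw.1⟩

section PingPong

open Pointwise Cardinal
open scoped Function

variable {K : Type*} [Group K] (f : ∀ i, G i →* K) {α : Type*} [MulAction K α] {X : ι → Set α}

theorem lift_neWord_prod_smul_subset
    (hpp : Pairwise fun i j => ∀ g : G i, g ∉ (φ i).range → f i g • X j ⊆ X i)
    {i j k : ι} (w : NeWord G i j) (hw : Reduced φ w.toWord) (hk : j ≠ k) :
    CoprodI.lift f w.prod • X k ⊆ X i := by
  induction w generalizing k with
  | singleton x _ => simpa using hpp hk x (reduced_neWord_singleton.mp hw)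
  | @append i j l _ w₁ hne w₂ ih₁ ih₂ =>
    obtain ⟨hw₁, hw₂⟩ := reduced_neWord_append.mp hw
    calc CoprodI.lift f (w₁.append hne w₂).prod • X k
        = CoprodI.lift f w₁.prod • CoprodI.lift f w₂.prod • X k := by simp [mul_smul]
      _ ⊆ CoprodI.lift f w₁.prod • X l := Set.smul_set_subset_smul_set_iff.mpr (ih₂ hw₂ hk)
      _ ⊆ X i := ih₁ hw₁ hne

theorem lift_neWord_prod_ne_one_of_other (hX : ∀ i, (X i).Nonempty)
    (hXdisj : Pairwise (Disjoint on X))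
    (hpp : Pairwise fun i j => ∀ g : G i, g ∉ (φ i).range → f i g • X j ⊆ X i)
    {i j k : ι} (w : NeWord G i j) (hw : Reduced φ w.toWord) (hi : k ≠ i) (hj : k ≠ j) :
    CoprodI.lift f w.prod ≠ 1 := by
  intro h1
  have : X k ⊆ X i := by simpa [h1] using lift_neWord_prod_smul_subset f hpp w hw hj.symm
  obtain ⟨x, hx⟩ := hX k
  exact (hXdisj hi).le_bot ⟨hx, this hx⟩

theorem lift_neWord_prod_ne_one_of_head_eq_last [Nontrivial ι] (hX : ∀ i, (X i).Nonempty)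
    (hXdisj : Pairwise (Disjoint on X))
    (hpp : Pairwise fun i j => ∀ g : G i, g ∉ (φ i).range → f i g • X j ⊆ X i)
    {i : ι} (w : NeWord G i i) (hw : Reduced φ w.toWord) : CoprodI.lift f w.prod ≠ 1 := by
  obtain ⟨k, hk⟩ := exists_ne i
  exact lift_neWord_prod_ne_one_of_other f hX hXdisj hpp w hw hk hk

theorem lift_neWord_prod_ne_one_of_index_head (hX : ∀ i, (X i).Nonempty)
    (hXdisj : Pairwise (Disjoint on X))
    (hpp : Pairwise fun i j => ∀ g : G i, g ∉ (φ i).range → f i g • X j ⊆ X i)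
    {i j : ι} (w : NeWord G i j) (hw : Reduced φ w.toWord) (hij : i ≠ j)
    (hidx : 3 ≤ (φ i).range.index ∨ (φ i).range.index = 0) : CoprodI.lift f w.prod ≠ 1 := by
  have : Nontrivial ι := ⟨⟨i, j, hij⟩⟩
  obtain ⟨t, ht, htw⟩ := Subgroup.exists_notMem_and_mul_notMem hidx w.head
  have ht1 : t ≠ 1 := fun h => ht (h ▸ one_mem _)
  have htw1 : t * w.head ≠ 1 := fun h => htw (h ▸ one_mem _)
  -- conjugating by `t` turns `w` into a word that starts and ends in `G i`
  let w' : NeWord G i i :=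
    (w.mulHead t htw1).append hij.symm (NeWord.singleton t⁻¹ (inv_ne_one.mpr ht1))
  have hw' : Reduced φ w'.toWord := reduced_neWord_append.mpr
    ⟨hw.neWord_replaceHead _ htw,
      reduced_neWord_singleton.mpr fun h => ht (by simpa using inv_mem h)⟩
  intro h1
  apply lift_neWord_prod_ne_one_of_head_eq_last f hX hXdisj hpp w' hw'
  simp [w', h1]

theorem lift_neWord_prod_ne_one [Nontrivial ι]
    (hcard : 3 ≤ #ι ∨ ∃ i, 3 ≤ (φ i).range.index ∨ (φ i).range.index = 0)
    (hX : ∀ i, (X i).Nonempty) (hXdisj : Pairwise (Disjoint on X))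
    (hpp : Pairwise fun i j => ∀ g : G i, g ∉ (φ i).range → f i g • X j ⊆ X i)
    {i j : ι} (w : NeWord G i j) (hw : Reduced φ w.toWord) : CoprodI.lift f w.prod ≠ 1 := by
  rcases hcard with hcard | ⟨k, hk⟩
  · obtain ⟨k, hi, hj⟩ := Cardinal.exists_ne_ne_of_three_le hcard i j
    exact lift_neWord_prod_ne_one_of_other f hX hXdisj hpp w hw hi hj
  by_cases hi : k = i <;> by_cases hj : k = j
  · subst hi hj
    exact lift_neWord_prod_ne_one_of_head_eq_last f hX hXdisj hpp w hw
  · subst hi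
    exact lift_neWord_prod_ne_one_of_index_head f hX hXdisj hpp w hw hj hk
  · subst hj
    simpa using lift_neWord_prod_ne_one_of_index_head f hX hXdisj hpp w.inv hw.neWord_inv hi hk
  · exact lift_neWord_prod_ne_one_of_other f hX hXdisj hpp w hw hi hj

theorem lift_injective_of_ping_pong [Nontrivial ι] (k : H →* K)
    (hf : ∀ i, (f i).comp (φ i) = k) (hk : Injective k)
    (hcard : 3 ≤ #ι ∨ ∃ i, 3 ≤ (φ i).range.index ∨ (φ i).range.index = 0)
    (hX : ∀ i, (X i).Nonempty) (hXdisj : Pairwise (Disjoint on X))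
    (hpp : Pairwise fun i j => ∀ g : G i, g ∉ (φ i).range → f i g • X j ⊆ X i) :
    Injective (lift f k hf) := by
  have hφ : ∀ i, Injective (φ i) := fun i =>
    Injective.of_comp (f := f i) (by rw [← MonoidHom.coe_comp, hf i]; exact hk)
  refine (injective_iff_map_eq_one _).mpr fun x hx => ?_
  obtain ⟨h, w, hw, rfl⟩ := exists_reduced_word_base_mul_eq hφ x
  rw [map_mul, lift_base, ← MonoidHom.comp_apply, lift_comp_ofCoprodI] at hx
  by_cases hw₀ : w = .empty
  · subst hw₀
    obtain rfl : h = 1 := hk (by simpa using hx)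
    simp
  obtain ⟨i, j, w, rfl⟩ := NeWord.of_word w hw₀
  -- absorb the base element `h` into the first letter of `w`
  have hhead : φ i h * w.head ∉ (φ i).range := by
    rw [Subgroup.mul_mem_cancel_left _ (MonoidHom.mem_range.mpr ⟨h, rfl⟩)]
    exact hw _ (List.mem_of_mem_head? w.toList_head?)
  have hhead1 : φ i h * w.head ≠ 1 := fun h1 => hhead (h1 ▸ one_mem _)
  refine absurd ?_ (lift_neWord_prod_ne_one f hcard hX hXdisj hpp (w.mulHead (φ i h) hhead1)
    (hw.neWord_replaceHead _ hhead))
  rw [NeWord.mulHead_prod, map_mul, CoprodI.lift_of, ← MonoidHom.comp_apply, hf]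
  exact hx

end PingPong

end Monoid.PushoutI

open Monoid.PushoutI in
/-- Ping-Pong Lemma, version 2 (amalgamated products): let `G` be generated by subgroups
`G₁` and `G₂` with `H = G₁ ⊓ G₂` proper in both and `[G_i : H] ≥ 3` for some `i`
(`relindex = 0` meaning infinite index). If `G` acts on `Ω` with disjoint non-empty
subsets `Ω₁, Ω₂` such that elements of `G_i \ H` send `Ω_j` into `Ω_i` (`i ≠ j`) and `H`
preserves both, then the natural map `G₁ *_H G₂ → G` is an isomorphism. -/
theorem ping_pong_amalgamated {G Ω : Type*} [Group G] [MulAction G Ω]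
    (G₁ G₂ : Subgroup G) (hgen : G₁ ⊔ G₂ = ⊤)
    (hidx : (3 ≤ (G₁ ⊓ G₂).relIndex G₁ ∨ (G₁ ⊓ G₂).relIndex G₁ = 0) ∨
            (3 ≤ (G₁ ⊓ G₂).relIndex G₂ ∨ (G₁ ⊓ G₂).relIndex G₂ = 0))
    (Ω₁ Ω₂ : Set Ω) (h1 : Ω₁.Nonempty) (h2 : Ω₂.Nonempty) (hd : Disjoint Ω₁ Ω₂)
    (hpp1 : ∀ g ∈ G₁, g ∉ G₁ ⊓ G₂ → ∀ ω ∈ Ω₂, g • ω ∈ Ω₁)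
    (hpp2 : ∀ g ∈ G₂, g ∉ G₁ ⊓ G₂ → ∀ ω ∈ Ω₁, g • ω ∈ Ω₂) :
    Function.Bijective
      (Monoid.PushoutI.lift
        (φ := fun b : Bool =>
          (Subgroup.inclusion
            (show G₁ ⊓ G₂ ≤ cond b G₁ G₂ by cases b; exacts [inf_le_right, inf_le_left]) :
            ↥(G₁ ⊓ G₂) →* ↥(cond b G₁ G₂)))
        (fun b : Bool => (cond b G₁ G₂).subtype) ((G₁ ⊓ G₂).subtype)
        (fun b : Bool => by ext x; rfl)) := by
  refine ⟨lift_injective_of_ping_pong _ _ _ (Subgroup.subtype_injective _) ?_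
    (X := fun b => cond b Ω₁ Ω₂) (Bool.forall_bool.mpr ⟨h2, h1⟩) ?_ ?_, ?_⟩
  · exact .inr <| hidx.elim (fun h => ⟨true, by simpa [Subgroup.relIndex] using h⟩)
      fun h => ⟨false, by simpa [Subgroup.relIndex] using h⟩
  · rintro (_ | _) (_ | _) hij <;> simp_all [Function.onFun, hd.symm]
  · rintro (_ | _) (_ | _) hij ⟨g, hg⟩ hgH <;> simp only [ne_eq, not_true_eq_false] at hij
    · exact Set.smul_set_subset_iff.mpr (hpp2 g hg fun h => hgH ⟨⟨g, h⟩, rfl⟩)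
    · exact Set.smul_set_subset_iff.mpr (hpp1 g hg fun h => hgH ⟨⟨g, h⟩, rfl⟩)
  · rw [← MonoidHom.range_eq_top, eq_top_iff, ← hgen, sup_le_iff]
    exact ⟨fun g hg => ⟨of true ⟨g, hg⟩, lift_of ..⟩, fun g hg => ⟨of false ⟨g, hg⟩, lift_of ..⟩⟩
end

section
/- Let G = ⟨F, t ∣ t f t⁻¹ = φ(f), f ∈ F⟩ be an ascending HNN-extension of F with respect to an injective endomorphism φ. Given h ∈ F and l ∈ ℕ with l ≥ 1, define the injective endomorphism ψ(f) = h·φˡ(f)·h⁻¹ of F, and let G̃ = ⟨F, s ∣ s f s⁻¹ = ψ(f), f ∈ F⟩. Let π: G → ℤ be the homomorphism with π(t) = 1 and π(F) = 0, let g = h·tˡ ∈ G, and let J = ⟨F, g⟩ ≤ G. Then J = π⁻¹(lℤ), and there is an isomorphism θ: G̃ → J restricting to the identity on F with θ(s) = g. -/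
/-!
Since `tᵏ f = φᵏ(f) tᵏ`, every element of the ascending HNN-extension can be written as
`t⁻ᵃ f tᵇ`. If it lies in `π⁻¹(lℤ)` then `b - a ∈ lℤ`, and it is the product of the conjugate
`t⁻ᵃ f tᵃ = (tˡ)⁻ᵃ φ⁽ˡ⁻¹⁾ᵃ(f) (tˡ)ᵃ` with a power of `tˡ = h⁻¹ g`, both of which lie in `J`.
Conjugation by `g` acts on `F` as `ψ`, so `s ↦ g` defines `θ : G̃ → G` with image `J`. It is
injective: for `x = s⁻ᵃ f sᵇ` with `θ x = 1`, applying `π` gives `l (b - a) = 0`, so `a = b`,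
and then `g⁻ᵃ f gᵃ = 1` forces `f = 1`.
-/

open HNNExtension Multiplicative

namespace HNNExtension

section lift

variable {G H : Type*} [Group G] [Group H] {A B : Subgroup G} {φ : A ≃* B}

theorem range_lift (f : G →* H) (x : H) (hx : ∀ a : A, x * f ↑a = f (φ a : G) * x) :
    (lift f x hx).range = Subgroup.closure (Set.range f ∪ {x}) := by
  apply le_antisymm
  · rintro _ ⟨y, rfl⟩
    induction y using induction_on with
    | of g => exact Subgroup.subset_closure (Or.inl ⟨g, (lift_of f x hx g).symm⟩)
    | t => exact Subgroup.subset_closure (Or.inr (lift_t f x hx))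
    | mul y z hy hz => rw [map_mul]; exact mul_mem hy hz
    | inv y hy => rw [map_inv]; exact inv_mem hy
  · rw [Subgroup.closure_le]
    rintro y (⟨g, rfl⟩ | hy)
    · exact ⟨of g, lift_of f x hx g⟩
    · exact ⟨t, (lift_t f x hx).trans (Set.mem_singleton_iff.1 hy).symm⟩

end lift

section ascending

variable {F : Type*} [Group F] {φ : Monoid.End F} {e : (⊤ : Subgroup F) ≃* (φ : F →* F).range}

theorem t_pow_mul_of (he : ∀ f : F, (e ⟨f, trivial⟩ : F) = φ f) (n : ℕ) (f : F) :
    (t : HNNExtension F ⊤ (φ : F →* F).range e) ^ n * of f = of ((φ ^ n) f) * t ^ n := by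
  induction n generalizing f with
  | zero => simp
  | succ n ih =>
    have t_mul : (t : HNNExtension F ⊤ (φ : F →* F).range e) * of f = of (φ f) * t := by
      simpa only [he] using t_mul_of (φ := e) ⟨f, trivial⟩
    rw [pow_succ, mul_assoc, t_mul, ← mul_assoc, ih, mul_assoc, ← pow_succ, Monoid.End.coe_pow,
      Monoid.End.coe_pow, Function.iterate_succ_apply]

theorem of_mul_inv_t_pow (he : ∀ f : F, (e ⟨f, trivial⟩ : F) = φ f) (n : ℕ) (f : F) :
    (of f : HNNExtension F ⊤ (φ : F →* F).range e) * (t ^ n)⁻¹ = (t ^ n)⁻¹ * of ((φ ^ n) f) := by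
  rw [mul_inv_eq_iff_eq_mul, mul_assoc, ← t_pow_mul_of he, inv_mul_cancel_left]

theorem exists_eq_inv_t_pow_mul_of_mul_t_pow (he : ∀ f : F, (e ⟨f, trivial⟩ : F) = φ f)
    (x : HNNExtension F ⊤ (φ : F →* F).range e) :
    ∃ (a b : ℕ) (f : F), x = (t ^ a)⁻¹ * of f * t ^ b := by
  induction x using HNNExtension.induction_on with
  | of f => exact ⟨0, 0, f, by simp⟩
  | t => exact ⟨0, 1, 1, by simp⟩
  | inv x hx =>
    obtain ⟨a, b, f, rfl⟩ := hx
    exact ⟨b, a, f⁻¹, by rw [map_inv]; group⟩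
  | mul x y hx hy =>
    obtain ⟨a, b, f, rfl⟩ := hx
    obtain ⟨c, d, f', rfl⟩ := hy
    rcases le_total c b with hcb | hbc
    · obtain ⟨k, rfl⟩ := Nat.exists_eq_add_of_le' hcb
      refine ⟨a, k + d, f * (φ ^ k) f', ?_⟩
      calc (t ^ a)⁻¹ * of f * t ^ (k + c) * ((t ^ c)⁻¹ * of f' * t ^ d)
          = (t ^ a)⁻¹ * of f * (t ^ k * of f') * t ^ d := by rw [pow_add]; group
        _ = (t ^ a)⁻¹ * of (f * (φ ^ k) f') * t ^ (k + d) := by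
          rw [t_pow_mul_of he, map_mul, pow_add]; group
    · obtain ⟨k, rfl⟩ := Nat.exists_eq_add_of_le' hbc
      refine ⟨k + a, d, (φ ^ k) f * f', ?_⟩
      calc (t ^ a)⁻¹ * of f * t ^ b * ((t ^ (k + b))⁻¹ * of f' * t ^ d)
          = (t ^ a)⁻¹ * (of f * (t ^ k)⁻¹) * of f' * t ^ d := by rw [pow_add]; group
        _ = (t ^ (k + a))⁻¹ * of ((φ ^ k) f * f') * t ^ d := by
          rw [of_mul_inv_t_pow he, map_mul, pow_add]; group

theorem inv_t_pow_mul_of_mul_t_pow_mem (he : ∀ f : F, (e ⟨f, trivial⟩ : F) = φ f) {l : ℕ}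
    (hl : 1 ≤ l) {H : Subgroup (HNNExtension F ⊤ (φ : F →* F).range e)}
    (hof : ∀ f : F, of f ∈ H) (ht : t ^ l ∈ H) (a : ℕ) (f : F) :
    (t ^ a)⁻¹ * of f * t ^ a ∈ H := by
  obtain ⟨m, hm⟩ := Nat.exists_eq_add_of_le' (Nat.le_mul_of_pos_left a hl)
  -- conjugating by `tᵃ` is conjugating by `tˡᵃ = tᵐ tᵃ` after applying `φᵐ`
  have hconj : (t ^ a : HNNExtension F ⊤ (φ : F →* F).range e)⁻¹ * of f * t ^ a
      = ((t ^ l) ^ a)⁻¹ * of ((φ ^ m) f) * (t ^ l) ^ a := by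
    rw [← pow_mul, hm, pow_add, mul_assoc _ (of ((φ ^ m) f)), ← mul_assoc (of ((φ ^ m) f)),
      ← t_pow_mul_of he]
    group
  rw [hconj]
  exact mul_mem (mul_mem (inv_mem (pow_mem ht a)) (hof _)) (pow_mem ht a)

theorem comap_zpowers_le_of_t_pow_mem (he : ∀ f : F, (e ⟨f, trivial⟩ : F) = φ f)
    (π : HNNExtension F ⊤ (φ : F →* F).range e →* Multiplicative ℤ)
    (hπt : π t = ofAdd 1) (hπF : ∀ f : F, π (of f) = 1) {l : ℕ} (hl : 1 ≤ l)
    {H : Subgroup (HNNExtension F ⊤ (φ : F →* F).range e)}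
    (hof : ∀ f : F, of f ∈ H) (ht : t ^ l ∈ H) :
    Subgroup.comap π (Subgroup.zpowers (ofAdd (l : ℤ))) ≤ H := by
  intro x hx
  obtain ⟨a, b, f, rfl⟩ := exists_eq_inv_t_pow_mul_of_mul_t_pow he x
  obtain ⟨k, hk⟩ := Subgroup.mem_zpowers_iff.mp (Subgroup.mem_comap.mp hx)
  have hsplit : (t ^ a : HNNExtension F ⊤ (φ : F →* F).range e)⁻¹ * of f * t ^ b
      = (t ^ a)⁻¹ * of f * t ^ a * t ^ ((b : ℤ) - a) := by
    rw [mul_assoc _ (t ^ a), ← zpow_natCast t b, ← zpow_natCast t a, ← zpow_add, add_sub_cancel]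
  have hba : (b : ℤ) - a = l * k := by
    rw [hsplit, map_mul, map_zpow, hπt] at hk
    simp only [map_mul, map_inv, map_pow, hπF, mul_one, inv_mul_cancel, one_mul] at hk
    apply_fun toAdd at hk
    simpa [mul_comm] using hk.symm
  rw [hsplit, hba, zpow_mul, zpow_natCast]
  exact mul_mem (inv_t_pow_mul_of_mul_t_pow_mem he hl hof ht a f) (zpow_mem ht k)

theorem injective_of_injective_comp_of (he : ∀ f : F, (e ⟨f, trivial⟩ : F) = φ f)
    {K Q : Type*} [Group K] [Group Q] (θ : HNNExtension F ⊤ (φ : F →* F).range e →* K)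
    (hθ : Function.Injective (θ.comp of)) (ρ : K →* Q) (hρ : ∀ f : F, ρ (θ (of f)) = 1)
    (ht : ¬IsOfFinOrder (ρ (θ t))) :
    Function.Injective θ := by
  rw [injective_iff_map_eq_one]
  intro x hx
  obtain ⟨a, b, f, rfl⟩ := exists_eq_inv_t_pow_mul_of_mul_t_pow he x
  obtain rfl : a = b := by
    apply injective_pow_iff_not_isOfFinOrder.mpr ht
    simpa only [map_mul, map_inv, map_pow, hρ, mul_one, map_one, inv_mul_eq_one]
      using congrArg ρ hx
  have hf : θ (of f) = 1 := by
    rw [map_mul, map_mul, map_inv, mul_assoc, inv_mul_eq_one] at hx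
    exact mul_eq_right.mp hx.symm
  obtain rfl : f = 1 := hθ (by simpa using hf)
  simp

theorem of_mul_t_pow_mul_of (he : ∀ f : F, (e ⟨f, trivial⟩ : F) = φ f) (h : F) (l : ℕ) (f : F) :
    (of h * t ^ l : HNNExtension F ⊤ (φ : F →* F).range e) * of f
      = of (h * (φ ^ l) f * h⁻¹) * (of h * t ^ l) := by
  rw [mul_assoc, t_pow_mul_of he, map_mul, map_mul, map_inv]
  group

end ascending

end HNNExtension

theorem ascending_hnn_change_of_letter_general {F : Type*} [Group F]
    (φ : Monoid.End F)
    (h : F) (l : ℕ) (hl : 1 ≤ l)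
    (ψ : Monoid.End F) (hψ : ∀ f : F, ψ f = h * (φ ^ l) f * h⁻¹)
    (e : (⊤ : Subgroup F) ≃* (φ : F →* F).range)
    (he : ∀ f : F, (e ⟨f, trivial⟩ : F) = φ f)
    (e' : (⊤ : Subgroup F) ≃* (ψ : F →* F).range)
    (he' : ∀ f : F, (e' ⟨f, trivial⟩ : F) = ψ f)
    (π : HNNExtension F ⊤ (φ : F →* F).range e →* Multiplicative ℤ)
    (hπt : π HNNExtension.t = Multiplicative.ofAdd 1)
    (hπF : ∀ f : F, π (HNNExtension.of f) = 1) :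
    let G := HNNExtension F ⊤ (φ : F →* F).range e
    let G' := HNNExtension F ⊤ (ψ : F →* F).range e'
    let g : G := HNNExtension.of h * HNNExtension.t ^ l
    let J : Subgroup G := Subgroup.closure (Set.range (HNNExtension.of : F →* G) ∪ {g})
    J = Subgroup.comap π (Subgroup.zpowers (Multiplicative.ofAdd (l : ℤ))) ∧
    ∃ θ : G' →* G, Function.Injective θ ∧ θ.range = J ∧
      (∀ f : F, θ (HNNExtension.of f) = HNNExtension.of f) ∧ θ HNNExtension.t = g := by
  intro G G' g J
  have hg : ∀ a : (⊤ : Subgroup F), g * of (a : F) = of (e' a : F) * g := fun a => by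
    rw [he', hψ]
    exact of_mul_t_pow_mul_of he h l a
  have hπg : π g = ofAdd (l : ℤ) := by simp [g, hπF, hπt, ← ofAdd_nsmul]
  have hof_mem : ∀ f : F, of f ∈ J := fun f => Subgroup.subset_closure (Or.inl ⟨f, rfl⟩)
  have hg_mem : g ∈ J := Subgroup.subset_closure (Or.inr rfl)
  have ht_mem : (t : G) ^ l ∈ J := by
    simpa [g] using mul_mem (inv_mem (hof_mem h)) hg_mem
  refine ⟨le_antisymm ?_ (comap_zpowers_le_of_t_pow_mem he π hπt hπF hl hof_mem ht_mem),
    lift of g hg, ?_, range_lift of g hg, lift_of of g hg, lift_t of g hg⟩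
  · rw [Subgroup.closure_le]
    rintro _ (⟨f, rfl⟩ | rfl)
    · simp [hπF]
    · simp [hπg]
  · refine injective_of_injective_comp_of he' _ ?_ π (by simp [hπF]) ?_
    · simpa [Function.Injective] using of_injective (φ := e)
    · rw [lift_t, hπg]
      exact not_isOfFinOrder_of_isMulTorsionFree (by simpa using Nat.one_le_iff_ne_zero.mp hl)

/-- Let `G = ⟨F, t ∣ t f t⁻¹ = φ(f)⟩` be the ascending HNN-extension of `F` w.r.t. an
injective endomorphism `φ` (realised as `HNNExtension F ⊤ φ.range e`).  Given `h ∈ F` and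
`l ≥ 1`, let `ψ(f) = h·φˡ(f)·h⁻¹` and let `G̃ = ⟨F, s ∣ s f s⁻¹ = ψ(f)⟩` be the
corresponding ascending HNN-extension.  Let `π : G → ℤ` be the homomorphism with
`π(t) = 1` and `π(F) = 0`, let `g = h·tˡ` and `J = ⟨F, g⟩ ≤ G`.  Then `J = π⁻¹(lℤ)`, and
there is an isomorphism `θ : G̃ ≅ J` restricting to the identity on `F` with `θ(s) = g`
(expressed as an injective homomorphism `θ : G̃ → G` with range `J`). -/
theorem ascending_hnn_change_of_letter {F : Type*} [Group F]
    (φ : Monoid.End F) (hφ : Function.Injective φ)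
    (h : F) (l : ℕ) (hl : 1 ≤ l)
    (ψ : Monoid.End F) (hψ : ∀ f : F, ψ f = h * (φ ^ l) f * h⁻¹)
    (e : (⊤ : Subgroup F) ≃* (φ : F →* F).range)
    (he : ∀ f : F, (e ⟨f, trivial⟩ : F) = φ f)
    (e' : (⊤ : Subgroup F) ≃* (ψ : F →* F).range)
    (he' : ∀ f : F, (e' ⟨f, trivial⟩ : F) = ψ f)
    (π : HNNExtension F ⊤ (φ : F →* F).range e →* Multiplicative ℤ)
    (hπt : π HNNExtension.t = Multiplicative.ofAdd 1)
    (hπF : ∀ f : F, π (HNNExtension.of f) = 1) :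
    let G := HNNExtension F ⊤ (φ : F →* F).range e
    let G' := HNNExtension F ⊤ (ψ : F →* F).range e'
    let g : G := HNNExtension.of h * HNNExtension.t ^ l
    let J : Subgroup G := Subgroup.closure (Set.range (HNNExtension.of : F →* G) ∪ {g})
    J = Subgroup.comap π (Subgroup.zpowers (Multiplicative.ofAdd (l : ℤ))) ∧
    ∃ θ : G' →* G, Function.Injective θ ∧ θ.range = J ∧
      (∀ f : F, θ (HNNExtension.of f) = HNNExtension.of f) ∧ θ HNNExtension.t = g :=
  ascending_hnn_change_of_letter_general φ h l hl ψ hψ e he e' he' π hπt hπF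
end

section
/- Let G be a group acting on a tree T such that all edge stabilizers are free groups, and let g, h ∈ G be commuting elliptic elements such that the subgroup ⟨g, h⟩ is not cyclic and is abelian of rank 2 (e.g., ⟨g,h⟩ ≅ ℤ²). Then Fix(g) ∩ Fix(h) is non-empty and consists of a single vertex of T. -/
/-!
Since `g` and `h` commute, `h` permutes the subtree `Fix(g)`. Projecting a fixed point `v` of `h`
to its nearest point `w` in `Fix(g)` commutes with `h`, so `h • w = w` and `Fix(g) ∩ Fix(h)` is
nonempty. If it contained two vertices it would contain an edge, whose pointwise stabilizer is a
free group containing the commuting elements `g` and `h`; but commuting elements of a free group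
are powers of a common element, so `(m, n) ↦ g ^ m * h ^ n` could not be injective.
-/

open Function MulAction

namespace IsFreeGroup

variable (L : Type*) [Group L] [IsFreeGroup L]

theorem subsingleton_generators_of_isMulCommutative [IsMulCommutative L] :
    Subsingleton (Generators L) := by
  classical
  refine ⟨fun x y => by_contra fun hxy => ?_⟩
  -- the transpositions `(0 1)` and `(0 2)` do not commute
  let f : Generators L → Equiv.Perm (Fin 3) :=
    fun s => if s = x then Equiv.swap 0 1 else Equiv.swap 0 2
  have key := congrArg (lift f) (isMulCommutative_iff.mp ‹_› (of x) (of y))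
  simp only [map_mul, lift_of, f, if_neg (Ne.symm hxy)] at key
  exact absurd key (by decide)

theorem isCyclic_of_isMulCommutative [IsMulCommutative L] : IsCyclic L := by
  have := subsingleton_generators_of_isMulCommutative L
  have : IsCyclic (FreeGroup (Generators L)) := by
    cases isEmpty_or_nonempty (Generators L)
    · infer_instance
    · have := uniqueOfSubsingleton (Classical.arbitrary (Generators L))
      infer_instance
  exact isCyclic_of_surjective (mulEquiv L) (mulEquiv L).surjective

variable {L}

theorem exists_mem_zpowers_of_commute {x y : L} (hxy : Commute x y) :
    ∃ z : L, x ∈ Subgroup.zpowers z ∧ y ∈ Subgroup.zpowers z := by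
  let H := Subgroup.closure ({x, y} : Set L)
  have : IsMulCommutative H := Subgroup.isMulCommutative_closure <| by
    simp only [Set.mem_insert_iff, Set.mem_singleton_iff]
    rintro a (rfl | rfl) b (rfl | rfl) <;> first | rfl | exact hxy.eq | exact hxy.symm.eq
  obtain ⟨z, hz⟩ := (isCyclic_of_isMulCommutative H).exists_generator
  have hmem : ∀ a ∈ H, a ∈ Subgroup.zpowers (z : L) := fun a ha => by
    obtain ⟨k, hk⟩ := Subgroup.mem_zpowers_iff.mp (hz ⟨a, ha⟩)
    exact Subgroup.mem_zpowers_iff.mpr ⟨k, congrArg Subtype.val hk⟩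
  exact ⟨z, hmem x (Subgroup.subset_closure (by simp)),
    hmem y (Subgroup.subset_closure (by simp))⟩

end IsFreeGroup

theorem not_injective_zpow_mul_zpow_of_mem_zpowers {G : Type*} [Group G] {g h z : G}
    (hg : g ∈ Subgroup.zpowers z) (hh : h ∈ Subgroup.zpowers z) :
    ¬Injective fun p : ℤ × ℤ => g ^ p.1 * h ^ p.2 := by
  obtain ⟨m, rfl⟩ := Subgroup.mem_zpowers_iff.mp hg
  obtain ⟨n, rfl⟩ := Subgroup.mem_zpowers_iff.mp hh
  intro hinj
  have hkernel : ((n, -m) : ℤ × ℤ) = (0, 0) :=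
    hinj (by simp only [← zpow_mul, ← zpow_add]; ring_nf)
  have hm : m = 0 := by simpa using congrArg Prod.snd hkernel
  simpa using hinj (a₁ := (1, 0)) (a₂ := (0, 0)) (by simp [hm])

theorem Subgroup.not_injective_zpow_mul_zpow_of_isFreeGroup {G : Type*} [Group G]
    (K : Subgroup G) [IsFreeGroup K] {g h : G} (hg : g ∈ K) (hh : h ∈ K) (hgh : Commute g h) :
    ¬Injective fun p : ℤ × ℤ => g ^ p.1 * h ^ p.2 := by
  obtain ⟨z, hgz, hhz⟩ :=
    IsFreeGroup.exists_mem_zpowers_of_commute (x := (⟨g, hg⟩ : K)) (y := ⟨h, hh⟩)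
      (Subtype.ext hgh)
  have hmap := MonoidHom.map_zpowers K.subtype z
  exact not_injective_zpow_mul_zpow_of_mem_zpowers (hmap ▸ Subgroup.mem_map_of_mem _ hgz)
    (hmap ▸ Subgroup.mem_map_of_mem _ hhz)

namespace SimpleGraph

variable {V : Type*} {G : SimpleGraph V}

def IsPathConvex (G : SimpleGraph V) (S : Set V) : Prop :=
  ∀ ⦃a b : V⦄ (p : G.Walk a b), p.IsPath → a ∈ S → b ∈ S → ∀ x ∈ p.support, x ∈ S

theorem IsPathConvex.inter {S S' : Set V} (hS : G.IsPathConvex S) (hS' : G.IsPathConvex S') :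
    G.IsPathConvex (S ∩ S') :=
  fun _ _ p hp ha hb x hx => ⟨hS p hp ha.1 hb.1 x hx, hS' p hp ha.2 hb.2 x hx⟩

theorem IsPathConvex.exists_adj_mem {S : Set V} (hS : G.IsPathConvex S) (hG : G.Preconnected)
    {a b : V} (ha : a ∈ S) (hb : b ∈ S) (hab : a ≠ b) : ∃ c ∈ S, G.Adj a c := by
  classical
  obtain ⟨p⟩ := hG a b
  have hnil : ¬p.bypass.Nil := Walk.not_nil_of_ne hab
  exact ⟨_, hS _ p.bypass_isPath ha hb _ (p.bypass.getVert_mem_support 1), Walk.adj_snd hnil⟩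

theorem IsTree.isPathConvex_fixedPoints (hG : G.IsTree) (f : G →g G) (hf : Injective f) :
    G.IsPathConvex {x | f x = x} := by
  intro a b p hp ha hb
  have hmap : (p.map f).copy ha hb = p :=
    (hG.existsUnique_path a b).unique (by simpa using hp.map hf) hp
  have hsupp : p.support.map f = p.support.map id := by
    simpa using congrArg Walk.support hmap
  exact List.map_eq_map_iff.mp hsupp

theorem Walk.exists_isPath_meeting_set_only_at_start {S : Set V} {u v : V} (p : G.Walk u v)
    (hp : ∃ x ∈ p.support, x ∈ S) :
    ∃ w ∈ S, ∃ q : G.Walk w v, q.IsPath ∧ ∀ x ∈ q.support, x ∈ S → x = w := by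
  classical
  suffices ∃ w ∈ S, ∃ q : G.Walk w v, ∀ x ∈ q.support, x ∈ S → x = w by
    obtain ⟨w, hw, q, hq⟩ := this
    exact ⟨w, hw, q.bypass, q.bypass_isPath,
      fun x hx => hq x (q.support_bypass_subset_support hx)⟩
  induction p with
  | nil => exact ⟨_, by simpa using hp, .nil, by simp⟩
  | @cons a _ _ hadj p ih =>
    by_cases hpS : ∃ x ∈ p.support, x ∈ S
    · exact ih hpS
    · push Not at hpS
      refine ⟨a, ?_, .cons hadj p, fun x hx hxS => ?_⟩
      · obtain ⟨x, hx, hxS⟩ := hp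
        rcases List.mem_cons.mp hx with rfl | hx
        exacts [hxS, absurd hxS (hpS x hx)]
      · rcases List.mem_cons.mp hx with rfl | hx
        exacts [rfl, absurd hxS (hpS x hx)]

/-- In a tree, the vertex of a path-convex set `S` nearest to `v` is unique. -/
theorem IsTree.eq_of_isPath_meeting_set_only_at_start (hG : G.IsTree) {S : Set V}
    (hS : G.IsPathConvex S) {w w' v : V} (hw : w ∈ S) (hw' : w' ∈ S)
    {p : G.Walk w v} (hp : p.IsPath) (hpS : ∀ x ∈ p.support, x ∈ S → x = w)
    {q : G.Walk w' v} (hq : q.IsPath) (hqS : ∀ x ∈ q.support, x ∈ S → x = w') : w = w' := by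
  classical
  by_contra hne
  let r := (p.append q.reverse).bypass
  have hr : r.IsPath := Walk.bypass_isPath _
  have hrS : ∀ x ∈ r.support, x = w ∨ x = w' := by
    intro x hx
    have hxS := hS r hr hw hw' x hx
    have hx' := (p.append q.reverse).support_bypass_subset_support hx
    rw [Walk.support_append, Walk.support_reverse] at hx'
    rcases List.mem_append.mp hx' with hx' | hx'
    · exact .inl (hpS x hx' hxS)
    · exact .inr (hqS x (List.mem_reverse.mp (List.mem_of_mem_tail hx')) hxS)
  have hadj : G.Adj w w' := by
    have hnil : ¬r.Nil := Walk.not_nil_of_ne hne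
    rcases hrS _ (r.getVert_mem_support 1) with h | h
    · exact absurd h (Walk.adj_snd hnil).ne.symm
    · exact h ▸ Walk.adj_snd hnil
  have hwq : w ∉ q.support := fun h => hne (hqS w h hw)
  have hpq : q.cons hadj = p := (hG.existsUnique_path w v).unique (hq.cons hwq) hp
  have hw'p : w' ∈ p.support := by
    rw [← hpq]
    exact List.mem_cons_of_mem _ q.start_mem_support
  exact hne (hpS w' hw'p hw').symm

end SimpleGraph

section TreeAction

variable {V G : Type*} [Group G] [MulAction G V] {T : SimpleGraph V}

theorem SimpleGraph.IsTree.isPathConvex_fixedBy (hT : T.IsTree)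
    (hadj : ∀ (g : G) (u v : V), T.Adj u v → T.Adj (g • u) (g • v)) (g : G) :
    T.IsPathConvex (fixedBy V g) :=
  hT.isPathConvex_fixedPoints ⟨(g • ·), hadj g _ _⟩ (MulAction.injective g)

theorem SimpleGraph.IsTree.exists_smul_eq_and_smul_eq_of_commute (hT : T.IsTree)
    (hadj : ∀ (g : G) (u v : V), T.Adj u v → T.Adj (g • u) (g • v)) {g h : G}
    (hgh : Commute g h) (hg : ∃ u : V, g • u = u) (hh : ∃ v : V, h • v = v) :
    ∃ w : V, g • w = w ∧ h • w = w := by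
  obtain ⟨u, hu⟩ := hg
  obtain ⟨v, hv⟩ := hh
  have hS := hT.isPathConvex_fixedBy hadj g
  have hh_fixedBy : ∀ x : V, h • x ∈ fixedBy V g ↔ x ∈ fixedBy V g :=
    (set_mem_fixedBy_iff _ _).mp (fixedBy_mem_fixedBy_of_commute hgh)
  obtain ⟨p⟩ := hT.connected.preconnected u v
  obtain ⟨w, hw, q, hq, hqS⟩ :=
    p.exists_isPath_meeting_set_only_at_start (S := fixedBy V g) ⟨u, p.start_mem_support, hu⟩
  refine ⟨w, hw, hT.eq_of_isPath_meeting_set_only_at_start hS ((hh_fixedBy w).mpr hw) hw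
    (p := (q.map ⟨(h • ·), hadj h _ _⟩).copy rfl hv) ?_ ?_ hq hqS⟩
  · rw [Walk.isPath_copy]
    exact hq.map (MulAction.injective h)
  · intro x hx hxS
    simp only [Walk.support_copy, Walk.support_map, List.mem_map] at hx
    obtain ⟨y, hy, rfl⟩ := hx
    exact congrArg (h • ·) (hqS y hy ((hh_fixedBy y).mp hxS))

end TreeAction

theorem commuting_elliptics_unique_common_fixed_point_general {V G : Type*} [Group G] [MulAction G V]
    (T : SimpleGraph V) (hT : T.IsTree)
    (hadj : ∀ (g : G) (u v : V), T.Adj u v → T.Adj (g • u) (g • v))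
    (hfree : ∀ u v : V, T.Adj u v →
      IsFreeGroup ↥(MulAction.stabilizer G u ⊓ MulAction.stabilizer G v))
    (g h : G) (hcomm : g * h = h * g)
    (hg : ∃ v : V, g • v = v) (hh : ∃ v : V, h • v = v)
    (hrank2 : Function.Injective fun p : ℤ × ℤ => g ^ p.1 * h ^ p.2) :
    ∃! v : V, g • v = v ∧ h • v = v := by
  obtain ⟨w, hw⟩ := hT.exists_smul_eq_and_smul_eq_of_commute hadj hcomm hg hh
  refine ⟨w, hw, fun b hb => by_contra fun hbw => ?_⟩
  have hS := (hT.isPathConvex_fixedBy hadj g).inter (hT.isPathConvex_fixedBy hadj h)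
  obtain ⟨c, ⟨hgc, hhc⟩, hbc⟩ := hS.exists_adj_mem hT.connected.preconnected hb hw hbw
  have := hfree b c hbc
  exact (stabilizer G b ⊓ stabilizer G c).not_injective_zpow_mul_zpow_of_isFreeGroup
    ⟨hb.1, hgc⟩ ⟨hb.2, hhc⟩ hcomm hrank2

/-- Let a group `G` act on a tree `T` (by graph automorphisms, without edge inversions)
with free edge stabilizers.  If `g, h ∈ G` are commuting elliptic elements generating a
non-cyclic free abelian subgroup of rank 2 (expressed by injectivity of
`(m, n) ↦ g^m h^n` on `ℤ²`), then `Fix(g) ∩ Fix(h)` consists of exactly one vertex. -/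
theorem commuting_elliptics_unique_common_fixed_point {V G : Type*} [Group G] [MulAction G V]
    (T : SimpleGraph V) (hT : T.IsTree)
    (hadj : ∀ (g : G) (u v : V), T.Adj u v → T.Adj (g • u) (g • v))
    (hnoinv : ∀ (g : G) (u v : V), T.Adj u v → ¬(g • u = v ∧ g • v = u))
    (hfree : ∀ u v : V, T.Adj u v →
      IsFreeGroup ↥(MulAction.stabilizer G u ⊓ MulAction.stabilizer G v))
    (g h : G) (hcomm : g * h = h * g)
    (hg : ∃ v : V, g • v = v) (hh : ∃ v : V, h • v = v)
    (hrank2 : Function.Injective fun p : ℤ × ℤ => g ^ p.1 * h ^ p.2) :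
    ∃! v : V, g • v = v ∧ h • v = v :=
  commuting_elliptics_unique_common_fixed_point_general T hT hadj hfree g h hcomm hg hh hrank2
end

section
/- Let A be a group and n ≥ 1. Then the n-fold free power A * A * ⋯ * A (free product of n copies of A) embeds into the free product A * ℤ; concretely, if f generates the ℤ factor, then the subgroups A, fAf⁻¹, f²Af⁻², …, f^{n−1}Af^{−(n−1)} of A * ⟨f⟩ generate their free product. -/
/-!
The group `A * G` maps to the semidirect product `(∗_{g ∈ G} A) ⋊ G`, where `G` permutes the
copies of `A` by left translation of the indices: `A` goes to the copy at `1` and `G` to itself.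
Conjugation by `g` then carries `A` onto the copy at `g`, so for distinct `g₁, …, gₙ ∈ G` the map
`∗ⱼ gⱼ A gⱼ⁻¹ → A * G` followed by this homomorphism is the inclusion of a free power along an
injective reindexing, which has a retraction. The theorem is the case `G = ℤ`, `gᵢ = fⁱ`.
-/

open Function

namespace Monoid.CoprodI

variable {ι κ M : Type*} [Monoid M]

def reindex (e : ι → κ) : CoprodI (fun _ : ι => M) →* CoprodI (fun _ : κ => M) :=
  lift fun i => of (M := fun _ : κ => M) (i := e i)

@[simp]
lemma reindex_of (e : ι → κ) (i : ι) (m : M) : reindex e (of (i := i) m) = of (i := e i) m :=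
  lift_of _ _

lemma reindex_comp {η : Type*} (e : ι → κ) (e' : κ → η) :
    reindex (M := M) (e' ∘ e) = (reindex e').comp (reindex e) := by
  ext; simp

lemma reindex_id : reindex (M := M) (id : ι → ι) = MonoidHom.id _ := by
  ext; simp

lemma reindex_injective {e : ι → κ} (he : Injective e) : Injective (reindex (M := M) e) := by
  classical
  let retraction : CoprodI (fun _ : κ => M) →* CoprodI (fun _ : ι => M) :=
    lift fun j => if h : ∃ i, e i = j then of (M := fun _ : ι => M) (i := h.choose) else 1
  have hret : retraction.comp (reindex e) = MonoidHom.id _ := by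
    ext i m
    have hex : ∃ i', e i' = e i := ⟨i, rfl⟩
    simp [retraction, he hex.choose_spec]
  exact LeftInverse.injective (DFunLike.congr_fun hret)

def reindexAut : Equiv.Perm ι →* MulAut (CoprodI fun _ : ι => M) where
  toFun σ := MonoidHom.toMulEquiv (reindex σ) (reindex σ.symm)
    (by rw [← reindex_comp, σ.symm_comp_self, reindex_id])
    (by rw [← reindex_comp, σ.self_comp_symm, reindex_id])
  map_one' := MulEquiv.toMonoidHom_injective reindex_id
  map_mul' σ τ := MulEquiv.toMonoidHom_injective (reindex_comp τ σ)

@[simp]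
lemma reindexAut_apply (σ : Equiv.Perm ι) (x : CoprodI fun _ : ι => M) :
    reindexAut σ x = reindex σ x :=
  rfl

end Monoid.CoprodI

namespace Monoid.Coprod

open CoprodI

variable {A G : Type*} [Group A] [Group G]

abbrev translationAction : G →* MulAut (CoprodI fun _ : G => A) :=
  reindexAut.comp (MulAction.toPermHom G G)

def toSemidirectProduct : Coprod A G →* CoprodI (fun _ : G => A) ⋊[translationAction] G :=
  lift (SemidirectProduct.inl.comp (of (M := fun _ : G => A) (i := 1))) SemidirectProduct.inr

lemma toSemidirectProduct_conj_inl (g : G) (a : A) :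
    toSemidirectProduct (MulAut.conj (inr g) (inl a))
      = SemidirectProduct.inl (of (M := fun _ : G => A) (i := g) a) := by
  rw [MulAut.conj_apply, map_mul, map_mul, map_inv]
  simp only [toSemidirectProduct, lift_apply_inl, lift_apply_inr, MonoidHom.comp_apply]
  rw [← map_inv, ← SemidirectProduct.inl_aut]
  simp

theorem lift_conj_injective {J : Type*} {g : J → G} (hg : Injective g) :
    Injective (CoprodI.lift fun j => (MulAut.conj (inr (g j))).toMonoidHom.comp inl :
      CoprodI (fun _ : J => A) →* Coprod A G) := by
  have hcomp : toSemidirectProduct.comp (CoprodI.lift fun j =>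
      (MulAut.conj (inr (g j) : Coprod A G)).toMonoidHom.comp inl)
        = SemidirectProduct.inl.comp (reindex g) := by
    refine CoprodI.ext_hom _ _ fun j => MonoidHom.ext fun a => ?_
    simpa using toSemidirectProduct_conj_inl (g j) a
  refine Injective.of_comp (f := toSemidirectProduct) ?_
  rw [← MonoidHom.coe_comp, hcomp, MonoidHom.coe_comp]
  exact SemidirectProduct.inl_injective.comp (reindex_injective hg)

end Monoid.Coprod

theorem free_power_embeds_in_coprod_with_Z_general (A : Type*) [Group A] (n : ℕ) :
    Function.Injective
      (Monoid.CoprodI.lift (fun i : Fin n =>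
        (MulAut.conj
            ((Monoid.Coprod.inr (Multiplicative.ofAdd (1 : ℤ)) :
              Monoid.Coprod A (Multiplicative ℤ)) ^ (i : ℕ))).toMonoidHom.comp
          Monoid.Coprod.inl) :
        Monoid.CoprodI (fun _ : Fin n => A) →* Monoid.Coprod A (Multiplicative ℤ)) := by
  simp_rw [← map_pow]
  refine Monoid.Coprod.lift_conj_injective fun i j hij => ?_
  simpa [← ofAdd_nsmul, Fin.ext_iff] using hij

/-- For any group `A` and `n ≥ 1`, the `n`-fold free power `A * ⋯ * A` embeds into
`A * ℤ`: with `f` the generator of the `ℤ` factor, the natural homomorphism from the free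
product of `n` copies of `A` sending the `i`-th copy to `f^i A f^{-i}` is injective. -/
theorem free_power_embeds_in_coprod_with_Z (A : Type*) [Group A] (n : ℕ) (hn : 1 ≤ n) :
    Function.Injective
      (Monoid.CoprodI.lift (fun i : Fin n =>
        (MulAut.conj
            ((Monoid.Coprod.inr (Multiplicative.ofAdd (1 : ℤ)) :
              Monoid.Coprod A (Multiplicative ℤ)) ^ (i : ℕ))).toMonoidHom.comp
          Monoid.Coprod.inl) :
        Monoid.CoprodI (fun _ : Fin n => A) →* Monoid.Coprod A (Multiplicative ℤ)) :=
  free_power_embeds_in_coprod_with_Z_general A n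
end

section
/- Let Γ be a graph, G a group, and ψ: A(Γ) → G a group homomorphism that is injective on the monoid A(Γ)⁺ of positive words of the right-angled Artin group A(Γ). Let U, V, W ⊆ V(Γ) be subsets each spanning a complete subgraph of Γ, and let x, y ∈ A(Γ)⁺. Then ψ is injective on the union x⟨U⟩x⁻¹ ∪ ⟨V⟩ ∪ y⁻¹⟨W⟩y ⊆ A(Γ). -/
/-!
Every element of `⟨U⟩` for a clique `U` is a quotient `a / b` of commuting positive elements.
If `ψ (p (a / b) p⁻¹) = ψ (q (c / d) q⁻¹)` with `c, d` commuting and `u = q⁻¹ p` positive, then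
`ψ (d u a) = ψ (c u b)` is an equation between images of positive elements, so `d u a = c u b`,
which unwinds to `p (a / b) p⁻¹ = q (c / d) q⁻¹`. The three conjugators `y⁻¹, 1, x` form a chain
for the order `p ≤ q ↔ p⁻¹ q ∈ A(Γ)⁺`, so any two of them have a positive quotient.
-/

open scoped commutatorElement

/-- The defining relators of the right-angled Artin group `A(Γ)` of a simple graph `Γ`:
commutators of pairs of adjacent vertices. -/
def raagRels {ι : Type*} (Γ : SimpleGraph ι) : Set (FreeGroup ι) :=
  {r | ∃ u v : ι, Γ.Adj u v ∧ r = ⁅FreeGroup.of u, FreeGroup.of v⁆}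

section Quotients

variable {H K : Type*} [Group H] [Group K]

def Submonoid.commutingDivs (M : Submonoid H) : Set H :=
  {g | ∃ a ∈ M, ∃ b ∈ M, Commute a b ∧ a / b = g}

theorem Submonoid.commute_of_mem_closure {S : Set H} (hS : ∀ p ∈ S, ∀ q ∈ S, Commute p q)
    {p q : H} (hp : p ∈ Submonoid.closure S) (hq : q ∈ Submonoid.closure S) : Commute p q :=
  Set.centralizer_centralizer_comm_of_comm hS _ (closure_le_centralizer_centralizer S hp) _
    (closure_le_centralizer_centralizer S hq)

theorem Subgroup.exists_div_of_mem_closure {S : Set H} (hS : ∀ p ∈ S, ∀ q ∈ S, Commute p q)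
    {g : H} (hg : g ∈ Subgroup.closure S) :
    ∃ a ∈ Submonoid.closure S, ∃ b ∈ Submonoid.closure S, a / b = g := by
  induction hg using Subgroup.closure_induction with
  | mem s hs => exact ⟨s, Submonoid.subset_closure hs, 1, one_mem _, div_one s⟩
  | one => exact ⟨1, one_mem _, 1, one_mem _, div_one 1⟩
  | mul _ _ _ _ ihg ihh =>
    obtain ⟨a, ha, b, hb, rfl⟩ := ihg
    obtain ⟨c, hc, d, hd, rfl⟩ := ihh
    have hbc := (Submonoid.commute_of_mem_closure hS hb hc).inv_left
    exact ⟨a * c, mul_mem ha hc, b * d, mul_mem hb hd,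
      ((Submonoid.commute_of_mem_closure hS hb hd).div_mul_div_comm hbc).symm⟩
  | inv _ _ ih =>
    obtain ⟨a, ha, b, hb, rfl⟩ := ih
    exact ⟨b, hb, a, ha, (inv_div a b).symm⟩

theorem Subgroup.closure_subset_commutingDivs {S : Set H} {M : Submonoid H} (hSM : S ⊆ M)
    (hS : ∀ p ∈ S, ∀ q ∈ S, Commute p q) : (Subgroup.closure S : Set H) ⊆ M.commutingDivs := by
  rintro g hg
  obtain ⟨a, ha, b, hb, rfl⟩ := Subgroup.exists_div_of_mem_closure hS hg
  have hle : Submonoid.closure S ≤ M := Submonoid.closure_le.mpr hSM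
  exact ⟨a, hle ha, b, hle hb, Submonoid.commute_of_mem_closure hS ha hb, rfl⟩

variable {ψ : H →* K} {M : Submonoid H}

theorem Set.InjOn.conj_div_eq_of_map_eq (hψ : Set.InjOn ψ M) {u a b c d : H} (hu : u ∈ M)
    (ha : a ∈ M) (hb : b ∈ M) (hc : c ∈ M) (hd : d ∈ M) (hcd : Commute c d)
    (h : ψ (u * (a / b) * u⁻¹) = ψ (c / d)) : u * (a / b) * u⁻¹ = c / d := by
  have hpos : ψ (d * (u * a)) = ψ (c * (u * b)) := by
    simp only [map_mul, map_div, map_inv] at h ⊢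
    calc ψ d * (ψ u * ψ a) = ψ d * (ψ u * (ψ a / ψ b) * (ψ u)⁻¹) * (ψ u * ψ b) := by
          simp only [div_eq_mul_inv]; group
      _ = ψ d * ψ c / ψ d * (ψ u * ψ b) := by rw [h, mul_div_assoc]
      _ = ψ c * (ψ u * ψ b) := by rw [((hcd.map ψ).eq).symm, mul_div_cancel_right]
  have heq := hψ (mul_mem hd (mul_mem hu ha)) (mul_mem hc (mul_mem hu hb)) hpos
  calc u * (a / b) * u⁻¹ = d⁻¹ * (d * (u * a)) * b⁻¹ * u⁻¹ := by
        simp only [div_eq_mul_inv]; group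
    _ = d⁻¹ * c := by rw [heq]; group
    _ = c / d := by rw [div_eq_mul_inv, hcd.inv_right.eq]

theorem Set.InjOn.conj_eq_conj_of_map_eq (hψ : Set.InjOn ψ M) {p q X Y : H}
    (hqp : q⁻¹ * p ∈ M) (hX : X ∈ M.commutingDivs) (hY : Y ∈ M.commutingDivs)
    (h : ψ (p * X * p⁻¹) = ψ (q * Y * q⁻¹)) : p * X * p⁻¹ = q * Y * q⁻¹ := by
  obtain ⟨a, ha, b, hb, -, rfl⟩ := hX
  obtain ⟨c, hc, d, hd, hcd, rfl⟩ := hY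
  have h' : ψ (q⁻¹ * p * (a / b) * (q⁻¹ * p)⁻¹) = ψ (c / d) :=
    calc _ = (ψ q)⁻¹ * ψ (p * (a / b) * p⁻¹) * ψ q := by
          simp only [map_mul, map_inv, div_eq_mul_inv]; group
      _ = (ψ q)⁻¹ * ψ (q * (c / d) * q⁻¹) * ψ q := by rw [h]
      _ = ψ (c / d) := by simp only [map_mul, map_inv, div_eq_mul_inv]; group
  calc p * (a / b) * p⁻¹ = q * (q⁻¹ * p * (a / b) * (q⁻¹ * p)⁻¹) * q⁻¹ := by
        simp only [div_eq_mul_inv]; group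
    _ = q * (c / d) * q⁻¹ := by rw [hψ.conj_div_eq_of_map_eq hqp ha hb hc hd hcd h']

theorem Set.InjOn.injOn_biUnion_conj_commutingDivs (hψ : Set.InjOn ψ M) {P : Set H}
    (hP : ∀ p ∈ P, ∀ q ∈ P, p⁻¹ * q ∈ M ∨ q⁻¹ * p ∈ M) :
    Set.InjOn ψ (⋃ p ∈ P, (fun g => p * g * p⁻¹) '' M.commutingDivs) := by
  intro g₁ hg₁ g₂ hg₂ h
  simp only [Set.mem_iUnion, Set.mem_image] at hg₁ hg₂
  obtain ⟨p, hp, X, hX, rfl⟩ := hg₁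
  obtain ⟨q, hq, Y, hY, rfl⟩ := hg₂
  rcases hP p hp q hq with hpq | hqp
  · exact (hψ.conj_eq_conj_of_map_eq hpq hY hX h.symm).symm
  · exact hψ.conj_eq_conj_of_map_eq hqp hX hY h

end Quotients

theorem raag_commute_of_adj {ι : Type*} {Γ : SimpleGraph ι} {u v : ι} (h : Γ.Adj u v) :
    Commute (PresentedGroup.of u : PresentedGroup (raagRels Γ)) (PresentedGroup.of v) := by
  rw [← commutatorElement_eq_one_iff_commute, PresentedGroup.of, PresentedGroup.of,
    ← map_commutatorElement]
  exact PresentedGroup.one_of_mem ⟨u, v, h, rfl⟩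

theorem raag_closure_subset_commutingDivs_of_isClique {ι : Type*} {Γ : SimpleGraph ι}
    {T : Set ι} (hT : Γ.IsClique T) :
    (Subgroup.closure ((PresentedGroup.of : ι → PresentedGroup (raagRels Γ)) '' T) :
      Set (PresentedGroup (raagRels Γ))) ⊆
      (Submonoid.closure (Set.range PresentedGroup.of)).commutingDivs := by
  refine Subgroup.closure_subset_commutingDivs
    ((Set.image_subset_range _ _).trans Submonoid.subset_closure) ?_
  rintro _ ⟨u, hu, rfl⟩ _ ⟨v, hv, rfl⟩
  rcases eq_or_ne u v with rfl | huv
  · exact Commute.refl _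
  · exact raag_commute_of_adj (hT hu hv huv)

/-- Let `ψ : A(Γ) → G` be a homomorphism injective on the monoid `A(Γ)⁺` of positive
words.  If `U, V, W ⊆ V(Γ)` span complete subgraphs and `x, y ∈ A(Γ)⁺`, then `ψ` is
injective on `x⟨U⟩x⁻¹ ∪ ⟨V⟩ ∪ y⁻¹⟨W⟩y`. -/
theorem raag_injective_on_union {ι G : Type*} [Group G] (Γ : SimpleGraph ι)
    (ψ : PresentedGroup (raagRels Γ) →* G)
    (hψ : Set.InjOn ψ
      (Submonoid.closure (Set.range (PresentedGroup.of : ι → PresentedGroup (raagRels Γ))) : Set (PresentedGroup (raagRels Γ))))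
    (U V W : Set ι)
    (hU : ∀ u ∈ U, ∀ v ∈ U, u ≠ v → Γ.Adj u v)
    (hV : ∀ u ∈ V, ∀ v ∈ V, u ≠ v → Γ.Adj u v)
    (hW : ∀ u ∈ W, ∀ v ∈ W, u ≠ v → Γ.Adj u v)
    (x y : PresentedGroup (raagRels Γ))
    (hx : x ∈ Submonoid.closure (Set.range (PresentedGroup.of : ι → PresentedGroup (raagRels Γ))))
    (hy : y ∈ Submonoid.closure (Set.range (PresentedGroup.of : ι → PresentedGroup (raagRels Γ)))) :
    Set.InjOn ψ
      ((fun g => x * g * x⁻¹) '' (Subgroup.closure ((PresentedGroup.of : ι → PresentedGroup (raagRels Γ)) '' U) : Set (PresentedGroup (raagRels Γ))) ∪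
        (Subgroup.closure ((PresentedGroup.of : ι → PresentedGroup (raagRels Γ)) '' V) : Set (PresentedGroup (raagRels Γ))) ∪
        (fun g => y⁻¹ * g * y) '' (Subgroup.closure ((PresentedGroup.of : ι → PresentedGroup (raagRels Γ)) '' W) : Set (PresentedGroup (raagRels Γ)))) := by
  set M := Submonoid.closure (Set.range (PresentedGroup.of : ι → PresentedGroup (raagRels Γ)))
  have hchain : ∀ p ∈ ({x, 1, y⁻¹} : Set _), ∀ q ∈ ({x, 1, y⁻¹} : Set _),
      p⁻¹ * q ∈ M ∨ q⁻¹ * p ∈ M := by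
    simp only [Set.mem_insert_iff, Set.mem_singleton_iff]
    rintro p (rfl | rfl | rfl) q (rfl | rfl | rfl) <;> simp [hx, hy, mul_mem hy hx]
  refine (hψ.injOn_biUnion_conj_commutingDivs hchain).mono ?_
  rintro g ((⟨g, hg, rfl⟩ | hg) | ⟨g, hg, rfl⟩)
  · exact Set.mem_biUnion (x := x) (by simp)
      ⟨g, raag_closure_subset_commutingDivs_of_isClique hU hg, rfl⟩
  · exact Set.mem_biUnion (x := 1) (by simp)
      ⟨g, raag_closure_subset_commutingDivs_of_isClique hV hg, by simp⟩
  · exact Set.mem_biUnion (x := y⁻¹) (by simp)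
      ⟨g, raag_closure_subset_commutingDivs_of_isClique hW hg, by simp⟩
end

section
/- Let G be a group acting on a tree T with infinite cyclic vertex stabilizers and edge stabilizers of finite index in the stabilizers of their endpoint vertices (e.g., G a generalised Baumslag–Solitar group acting on its Bass–Serre tree with infinite cyclic vertex and edge stabilizers). Fix a vertex v with stabilizer ⟨a⟩ ≅ ℤ. If B ≤ G is a subgroup that is not free, then B ∩ ⟨a⟩ ≠ {1}. -/
/-!
A nontrivial element `b ∈ B` fixing a vertex `u` lies in the infinite cyclic group `Stab u`, so
it has infinite order. Since edge stabilizers have finite index in vertex stabilizers, some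
positive power of `b` fixes the next vertex of a path from `u` to `v`, and so on, until a
nontrivial power of `b` fixes `v`, i.e. lies in `⟨a⟩`. Hence if `B ∩ ⟨a⟩ = 1`, then `B` acts
freely and without inversions on the tree, so `B` is free.

That last fact is derived from Mathlib's groupoid form of Nielsen–Schreier. For `Γ` acting freely
on a tree, the groupoid on the orbit space whose hom-sets are all `Γ` is free on one arrow per
`Γ`-orbit of positively oriented edges: labels of these arrows become a `Γ`-invariant labelling
of the oriented edges of the tree, which integrates along the tree to a potential, and the
potential defines the required functor. Vertex groups of a connected free groupoid are free, and
here they are `Γ`.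
-/

open MulAction CategoryTheory

universe u₁ u₂

namespace SimpleGraph

variable {V X : Type*} [Group X] {T : SimpleGraph V}

def IsPotential (T : SimpleGraph V) (c : V → V → X) (φ : V → X) : Prop :=
  ∀ ⦃u w : V⦄, T.Adj u w → φ w = c u w * φ u

theorem IsPotential.inv_mul_eq_of_reachable {c : V → V → X} {φ ψ : V → X}
    (hφ : IsPotential T c φ) (hψ : IsPotential T c ψ) {u w : V} (h : T.Reachable u w) :
    (φ u)⁻¹ * ψ u = (φ w)⁻¹ * ψ w := by
  obtain ⟨p⟩ := h
  induction p with
  | nil => rfl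
  | cons hadj _ ih => rw [← ih, hφ hadj, hψ hadj]; group

theorem IsPotential.mul_inv_eq_of_reachable {c : V → V → X} {φ ψ : V → X}
    (hφ : IsPotential T c φ) (hψ : IsPotential T c ψ) {u w : V} (h : T.Reachable u w) :
    ψ w * (ψ u)⁻¹ = φ w * (φ u)⁻¹ := by
  rw [inv_mul_eq_iff_eq_mul.1 (hφ.inv_mul_eq_of_reachable hψ h)]
  group

def Walk.edgeProd (c : V → V → X) : ∀ {u w : V}, T.Walk u w → X
  | _, _, .nil => 1
  | u, _, .cons (v := v) _ p => p.edgeProd c * c u v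

theorem Walk.edgeProd_concat (c : V → V → X) {u v w : V} (p : T.Walk u v) (h : T.Adj v w) :
    (p.concat h).edgeProd c = c v w * p.edgeProd c := by
  induction p with
  | nil => rw [concat_nil, edgeProd, edgeProd, edgeProd, one_mul, mul_one]
  | cons _ p ih => rw [concat_cons, edgeProd, edgeProd, ih, mul_assoc]

theorem IsTree.exists_isPotential (hT : T.IsTree) {c : V → V → X}
    (hc : ∀ ⦃u w : V⦄, T.Adj u w → c w u = (c u w)⁻¹) : ∃ φ, IsPotential T c φ := by
  obtain ⟨r⟩ := hT.connected.nonempty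
  choose path hpath using fun u => (hT.connected r u).exists_isPath
  refine ⟨fun u => (path u).edgeProd c, fun u w hadj => ?_⟩
  show (path w).edgeProd c = c u w * (path u).edgeProd c
  by_cases hu : u ∈ (path w).support
  · rw [hT.isAcyclic.path_concat (hpath u) (hpath w) hadj hu, Walk.edgeProd_concat]
  · have hw := hT.isAcyclic.mem_support_of_ne_mem_support_of_adj_of_isPath
      (hpath u) (hpath w) hadj hu
    rw [hT.isAcyclic.path_concat (hpath w) (hpath u) hadj.symm hw, Walk.edgeProd_concat, hc hadj]
    group

end SimpleGraph

section Orientation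

variable (Γ : Type*) {V : Type*} [Group Γ] [MulAction Γ V]

def edgeClass (p : V × V) : Set (V × V) := orbit Γ p ∪ orbit Γ p.swap

noncomputable def orientationRep (p : V × V) : V × V :=
  @Classical.epsilon _ ⟨p⟩ (· ∈ edgeClass Γ p)

/-- Since `orientationRep` only depends on `edgeClass`, this orientation is `Γ`-invariant; it is
an orientation (exactly one of `p`, `p.swap` is positive) when no element maps `p` to `p.swap`. -/
def IsPositive (p : V × V) : Prop := p ∈ orbit Γ (orientationRep Γ p)

def IsPositiveEdge (T : SimpleGraph V) (p : V × V) : Prop := T.Adj p.1 p.2 ∧ IsPositive Γ p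

variable {Γ}

theorem orientationRep_smul (g : Γ) (p : V × V) :
    orientationRep Γ (g • p) = orientationRep Γ p := by
  simp only [orientationRep, edgeClass, Prod.smul_swap, orbit_smul]

theorem orientationRep_swap (p : V × V) : orientationRep Γ p.swap = orientationRep Γ p := by
  simp only [orientationRep, edgeClass, Prod.swap_swap, Set.union_comm]

theorem isPositive_smul_iff (g : Γ) (p : V × V) :
    IsPositive Γ (g • p) ↔ IsPositive Γ p := by
  rw [IsPositive, IsPositive, orientationRep_smul, ← orbit_eq_iff, orbit_smul, orbit_eq_iff]

theorem isPositive_or_isPositive_swap (p : V × V) : IsPositive Γ p ∨ IsPositive Γ p.swap := by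
  have hrep : orientationRep Γ p ∈ edgeClass Γ p :=
    Classical.epsilon_spec ⟨p, Or.inl (mem_orbit_self p)⟩
  rcases hrep with h | h
  · exact Or.inl (mem_orbit_symm.1 h)
  · exact Or.inr (by rw [IsPositive, orientationRep_swap]; exact mem_orbit_symm.1 h)

theorem not_isPositive_and_isPositive_swap {p : V × V} (hp : ∀ g : Γ, g • p ≠ p.swap) :
    ¬(IsPositive Γ p ∧ IsPositive Γ p.swap) := by
  rintro ⟨hpos, hswap⟩
  obtain ⟨g, hg⟩ := mem_orbit_iff.1 hpos
  obtain ⟨k, hk⟩ := mem_orbit_iff.1 hswap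
  rw [orientationRep_swap] at hk
  exact hp (k * g⁻¹) (by rw [mul_smul, inv_smul_eq_iff.2 hg.symm, hk])

theorem isPositive_swap_iff {p : V × V} (hp : ∀ g : Γ, g • p ≠ p.swap) :
    IsPositive Γ p.swap ↔ ¬IsPositive Γ p := by
  have := not_isPositive_and_isPositive_swap hp
  have := isPositive_or_isPositive_swap (Γ := Γ) p
  tauto

theorem isPositiveEdge_smul_iff {T : SimpleGraph V}
    (hadj : ∀ (g : Γ) (u w : V), T.Adj u w → T.Adj (g • u) (g • w)) (g : Γ) (p : V × V) :
    IsPositiveEdge Γ T (g • p) ↔ IsPositiveEdge Γ T p := by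
  refine and_congr ⟨fun h => ?_, hadj g _ _⟩ (isPositive_smul_iff g p)
  simpa using hadj g⁻¹ _ _ h

end Orientation

variable (Γ V : Type*) [Group Γ] [MulAction Γ V] in
def OrbitGroupoid : Type _ := orbitRel.Quotient Γ V

namespace OrbitGroupoid

variable {Γ V X : Type*} [Group Γ] [MulAction Γ V] [Group X]

/-- `g : x ⟶ y` stands for the `Γ`-orbit of the pair `(g • x.out, y.out)`; for a free action,
these are all the `Γ`-orbits of pairs of points of `x × y`. -/
instance : Groupoid (OrbitGroupoid Γ V) where
  Hom _ _ := Γ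
  id _ := 1
  comp g h := h * g
  inv g := g⁻¹
  id_comp := mul_one
  comp_id := one_mul
  assoc _ _ _ := (mul_assoc _ _ _).symm
  inv_comp := mul_inv_cancel
  comp_inv := inv_mul_cancel

def endMulEquiv (x : OrbitGroupoid Γ V) : End x ≃* Γ :=
  { Equiv.refl Γ with map_mul' := fun _ _ => rfl }

variable (Γ) in
def mk (u : V) : OrbitGroupoid Γ V := Quotient.mk'' u

noncomputable def out (x : OrbitGroupoid Γ V) : V := Quotient.out x

theorem mk_out (x : OrbitGroupoid Γ V) : mk Γ x.out = x := Quotient.out_eq x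

theorem mk_smul (g : Γ) (u : V) : mk Γ (g • u) = mk Γ u :=
  Quotient.sound (mem_orbit u g)

theorem exists_smul_out (u : V) : ∃ g : Γ, g • (mk Γ u).out = u :=
  mem_orbit_symm.1 (Quotient.mk_out (s := orbitRel Γ V) u)

variable (Γ) in
noncomputable def fromOut (u : V) : Γ := (exists_smul_out (Γ := Γ) u).choose

theorem fromOut_smul_out (u : V) : fromOut Γ u • (mk Γ u).out = u :=
  (exists_smul_out u).choose_spec

variable (Γ) in
/-- The morphism `mk Γ u ⟶ mk Γ w` given by the pair `(u, w)`. -/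
noncomputable def pairHom (u w : V) : Γ := (fromOut Γ w)⁻¹ * fromOut Γ u

theorem pairHom_comp (u w z : V) : pairHom Γ w z * pairHom Γ u w = pairHom Γ u z := by
  simp only [pairHom]; group

theorem pairHom_smul_out (u w : V) :
    (pairHom Γ u w • (mk Γ u).out, (mk Γ w).out) = (fromOut Γ w)⁻¹ • (u, w) := by
  rw [Prod.smul_mk, pairHom, mul_smul, fromOut_smul_out, eq_inv_smul_iff.2 (fromOut_smul_out w)]

section FreeAction

variable (hfree : ∀ (g : Γ) (u : V), g • u = u → g = 1)
include hfree

theorem eq_of_smul_eq_smul {g k : Γ} {u : V} (h : g • u = k • u) : g = k :=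
  (inv_mul_eq_one.1 (hfree (k⁻¹ * g) u (by rw [mul_smul, h, inv_smul_smul]))).symm

theorem fromOut_smul (g : Γ) (u : V) : fromOut Γ (g • u) = g * fromOut Γ u := by
  apply eq_of_smul_eq_smul hfree (u := (mk Γ u).out)
  have h := fromOut_smul_out (Γ := Γ) (g • u)
  rw [mk_smul] at h
  rw [h, mul_smul, fromOut_smul_out]

theorem fromOut_out (x : OrbitGroupoid Γ V) : fromOut Γ x.out = 1 :=
  hfree _ _ (by simpa [mk_out] using fromOut_smul_out (Γ := Γ) x.out)

theorem pairHom_smul (g : Γ) (u w : V) : pairHom Γ (g • u) (g • w) = pairHom Γ u w := by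
  simp only [pairHom, fromOut_smul hfree]; group

theorem pairHom_out (g : Γ) (x y : OrbitGroupoid Γ V) : pairHom Γ (g • x.out) y.out = g := by
  simp only [pairHom, fromOut_smul hfree, fromOut_out hfree]; group

end FreeAction

abbrev Generator (T : SimpleGraph V) (x y : OrbitGroupoid Γ V) : Type _ :=
  {g : Γ // IsPositiveEdge Γ T (g • x.out, y.out)}

section Labels

variable {T : SimpleGraph V} (f : ∀ x y : OrbitGroupoid Γ V, Generator T x y → X)

open scoped Classical in
noncomputable def generatorLabel (x y : OrbitGroupoid Γ V) (g : Γ) : X :=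
  if h : IsPositiveEdge Γ T (g • x.out, y.out) then f x y ⟨g, h⟩ else 1

open scoped Classical in
noncomputable def edgeLabel (u w : V) : X :=
  if IsPositive Γ (u, w) then generatorLabel f (mk Γ u) (mk Γ w) (pairHom Γ u w)
  else (generatorLabel f (mk Γ w) (mk Γ u) (pairHom Γ w u))⁻¹

theorem edgeLabel_smul (hfree : ∀ (g : Γ) (u : V), g • u = u → g = 1) (g : Γ) (u w : V) :
    edgeLabel f (g • u) (g • w) = edgeLabel f u w := by
  classical
  have hpos : IsPositive Γ (g • u, g • w) ↔ IsPositive Γ (u, w) :=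
    isPositive_smul_iff g (u, w)
  simp only [edgeLabel, mk_smul, pairHom_smul hfree]
  exact if_congr hpos rfl rfl

theorem edgeLabel_swap
    (hnoinv : ∀ (g : Γ) (u w : V), T.Adj u w → ¬(g • u = w ∧ g • w = u))
    {u w : V} (h : T.Adj u w) : edgeLabel f w u = (edgeLabel f u w)⁻¹ := by
  have hswap : IsPositive Γ (w, u) ↔ ¬IsPositive Γ (u, w) :=
    isPositive_swap_iff (p := (u, w)) fun g hg =>
      hnoinv g u w h ⟨congrArg Prod.fst hg, congrArg Prod.snd hg⟩
  by_cases hpos : IsPositive Γ (u, w)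
  · rw [edgeLabel, edgeLabel, if_neg fun h => hswap.1 h hpos, if_pos hpos]
  · rw [edgeLabel, edgeLabel, if_pos (hswap.2 hpos), if_neg hpos, inv_inv]

theorem edgeLabel_smul_out (hfree : ∀ (g : Γ) (u : V), g • u = u → g = 1)
    {x y : OrbitGroupoid Γ V} {g : Γ} (h : IsPositiveEdge Γ T (g • x.out, y.out)) :
    edgeLabel f (g • x.out) y.out = f x y ⟨g, h⟩ := by
  rw [edgeLabel, if_pos h.2, mk_smul, mk_out, mk_out, pairHom_out hfree, generatorLabel,
    dif_pos h]

theorem isPositiveEdge_pairHom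
    (hadj : ∀ (g : Γ) (u w : V), T.Adj u w → T.Adj (g • u) (g • w))
    {u w : V} (h : IsPositiveEdge Γ T (u, w)) :
    IsPositiveEdge Γ T (pairHom Γ u w • (mk Γ u).out, (mk Γ w).out) := by
  rw [pairHom_smul_out]
  exact (isPositiveEdge_smul_iff hadj _ _).2 h

end Labels

variable (Γ) in
noncomputable def potentialFunctor (φ : V → X)
    (hφ : ∀ (k : Γ) (u w : V), (φ u)⁻¹ * φ (k • u) = (φ w)⁻¹ * φ (k • w)) :
    OrbitGroupoid Γ V ⥤ SingleObj X where
  obj _ := SingleObj.star X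
  map {x y} g := φ y.out * (φ ((g : Γ) • x.out))⁻¹
  map_id x := by
    show φ x.out * (φ ((1 : Γ) • x.out))⁻¹ = 1
    rw [one_smul, mul_inv_cancel]
  map_comp {x y z} g h := by
    show φ z.out * (φ (((h : Γ) * g) • x.out))⁻¹
      = φ z.out * (φ ((h : Γ) • y.out))⁻¹ * (φ y.out * (φ ((g : Γ) • x.out))⁻¹)
    have key := congrArg (·⁻¹) (hφ h y.out ((g : Γ) • x.out))
    simp only [mul_inv_rev, inv_inv] at key
    rw [mul_assoc, ← mul_assoc (φ _)⁻¹, key, mul_smul]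
    group

noncomputable def functorPotential (F : OrbitGroupoid Γ V ⥤ SingleObj X) (r u : V) : X :=
  F.map (X := mk Γ r) (Y := mk Γ u) (pairHom Γ r u)

theorem map_pairHom (F : OrbitGroupoid Γ V ⥤ SingleObj X) (r : V) {a b : V}
    {x y : OrbitGroupoid Γ V} (ha : mk Γ a = x) (hb : mk Γ b = y) :
    F.map (X := x) (Y := y) (pairHom Γ a b)
      = functorPotential F r b * (functorPotential F r a)⁻¹ := by
  subst ha hb
  rw [eq_mul_inv_iff_mul_eq, functorPotential, functorPotential, ← pairHom_comp r a b]
  exact (F.map_comp (X := mk Γ r) (Y := mk Γ a) (Z := mk Γ b) _ _).symm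

theorem map_eq_functorPotential (hfree : ∀ (g : Γ) (u : V), g • u = u → g = 1)
    (F : OrbitGroupoid Γ V ⥤ SingleObj X) (r : V) {x y : OrbitGroupoid Γ V} (g : x ⟶ y) :
    F.map g = functorPotential F r y.out * (functorPotential F r ((g : Γ) • x.out))⁻¹ := by
  conv_lhs => rw [← pairHom_out hfree (g : Γ) x y]
  exact map_pairHom F r (by rw [mk_smul, mk_out]) (mk_out y)

theorem isPotential_functorPotential {T : SimpleGraph V}
    (f : ∀ x y : OrbitGroupoid Γ V, Generator T x y → X)
    (hadj : ∀ (g : Γ) (u w : V), T.Adj u w → T.Adj (g • u) (g • w))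
    (hnoinv : ∀ (g : Γ) (u w : V), T.Adj u w → ¬(g • u = w ∧ g • w = u))
    (F : OrbitGroupoid Γ V ⥤ SingleObj X) (hF : ∀ x y e, F.map (X := x) (Y := y) e.1 = f x y e)
    (r : V) : T.IsPotential (edgeLabel f) (functorPotential F r) := by
  have hpos {u w : V} (h : IsPositiveEdge Γ T (u, w)) :
      functorPotential F r w * (functorPotential F r u)⁻¹ = edgeLabel f u w := by
    rw [← map_pairHom F r rfl rfl, hF _ _ ⟨_, isPositiveEdge_pairHom hadj h⟩, edgeLabel,
      if_pos h.2, generatorLabel, dif_pos (isPositiveEdge_pairHom hadj h)]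
  intro u w h
  rcases isPositive_or_isPositive_swap (Γ := Γ) (u, w) with hp | hp
  · rw [← hpos ⟨h, hp⟩]
    group
  · rw [edgeLabel_swap f hnoinv h.symm, ← hpos ⟨h.symm, hp⟩]
    group

/-- The generators `x ⟶ y` are the positively oriented edges `(g • x.out, y.out)`: each
`Γ`-orbit of positively oriented edges from `x` to `y` contains exactly one of them. -/
noncomputable abbrev isFreeGroupoid {T : SimpleGraph V} (hT : T.IsTree)
    (hadj : ∀ (g : Γ) (u w : V), T.Adj u w → T.Adj (g • u) (g • w))
    (hnoinv : ∀ (g : Γ) (u w : V), T.Adj u w → ¬(g • u = w ∧ g • w = u))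
    (hfree : ∀ (g : Γ) (u : V), g • u = u → g = 1) : IsFreeGroupoid (OrbitGroupoid Γ V) where
  quiverGenerators := ⟨Generator T⟩
  of e := e.1
  unique_lift {X} _ f := by
    let lab : ∀ x y : OrbitGroupoid Γ V, Generator T x y → X := fun _ _ e => f e
    obtain ⟨φ, hφ⟩ :=
      hT.exists_isPotential (c := edgeLabel lab) fun _ _ h => edgeLabel_swap lab hnoinv h
    have hφ_smul (k : Γ) (u w : V) : (φ u)⁻¹ * φ (k • u) = (φ w)⁻¹ * φ (k • w) :=
      hφ.inv_mul_eq_of_reachable (ψ := fun u => φ (k • u))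
        (fun u w h => (hφ (hadj k u w h)).trans (by rw [edgeLabel_smul lab hfree]))
        (hT.connected u w)
    refine ⟨potentialFunctor Γ φ hφ_smul, fun x y e => ?_, fun F hF => ?_⟩
    · show φ y.out * (φ (e.1 • x.out))⁻¹ = f e
      rw [hφ e.2.1, edgeLabel_smul_out lab hfree e.2, mul_inv_cancel_right]
      rfl
    · refine Functor.hext (fun _ => rfl) fun x y g => heq_of_eq ?_
      rw [map_eq_functorPotential hfree F x.out]
      exact hφ.mul_inv_eq_of_reachable (isPotential_functorPotential lab hadj hnoinv F hF x.out)
        (hT.connected _ _)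

theorem isFreeGroup_end {Γ V : Type u₁} [Group Γ] [MulAction Γ V] {T : SimpleGraph V}
    (hT : T.IsTree) (hadj : ∀ (g : Γ) (u w : V), T.Adj u w → T.Adj (g • u) (g • w))
    (hnoinv : ∀ (g : Γ) (u w : V), T.Adj u w → ¬(g • u = w ∧ g • w = u))
    (hfree : ∀ (g : Γ) (u : V), g • u = u → g = 1) (x : OrbitGroupoid Γ V) :
    IsFreeGroup (End x) := by
  let := isFreeGroupoid hT hadj hnoinv hfree
  have : Nonempty (OrbitGroupoid Γ V) := ⟨x⟩
  have : IsConnected (OrbitGroupoid Γ V) :=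
    zigzag_isConnected fun y z => Zigzag.of_hom (show y ⟶ z from (1 : Γ))
  exact IsFreeGroupoid.endIsFreeOfConnectedFree x

end OrbitGroupoid

theorem isFreeGroup_of_isTree {Γ : Type u₁} {V : Type u₂} [Group Γ] [MulAction Γ V]
    {T : SimpleGraph V} (hT : T.IsTree)
    (hadj : ∀ (g : Γ) (u w : V), T.Adj u w → T.Adj (g • u) (g • w))
    (hnoinv : ∀ (g : Γ) (u w : V), T.Adj u w → ¬(g • u = w ∧ g • w = u))
    (hfree : ∀ (g : Γ) (u : V), g • u = u → g = 1) : IsFreeGroup Γ := by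
  -- Mathlib's free groupoids have objects and morphisms in a single universe, hence the `ULift`s.
  obtain ⟨u⟩ := hT.connected.nonempty
  let x : OrbitGroupoid (ULift.{u₂} Γ) (ULift.{u₁} V) := OrbitGroupoid.mk _ (ULift.up u)
  have hT' : (T.comap (Equiv.ulift.{u₁} : ULift V ≃ V)).IsTree :=
    (SimpleGraph.Iso.comap _ T).isTree_iff.2 hT
  have := OrbitGroupoid.isFreeGroup_end (Γ := ULift.{u₂} Γ) (V := ULift.{u₁} V) hT'
    (fun g u w h => hadj g.down u.down w.down h)
    (fun g u w h hinv => hnoinv g.down u.down w.down h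
      ⟨congrArg ULift.down hinv.1, congrArg ULift.down hinv.2⟩)
    (fun g u h => ULift.ext _ _ (hfree g.down u.down (congrArg ULift.down h)))
    x
  exact IsFreeGroup.ofMulEquiv ((OrbitGroupoid.endMulEquiv x).trans MulEquiv.ulift)

theorem eq_one_of_pow_eq_one_of_mem_zpowers {G : Type*} [Group G] {x g : G}
    (hx : ¬IsOfFinOrder x) (hg : g ∈ Subgroup.zpowers x) {n : ℕ} (hn : n ≠ 0)
    (h : g ^ n = 1) : g = 1 := by
  obtain ⟨m, rfl⟩ := hg
  by_contra hne
  have hm : m ≠ 0 := by rintro rfl; exact hne (zpow_zero x)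
  refine hx (isOfFinOrder_iff_zpow_eq_one.2 ⟨m * n, mul_ne_zero hm (by exact_mod_cast hn), ?_⟩)
  rwa [zpow_mul, zpow_natCast]

theorem exists_pow_mem_stabilizer_of_reachable {G V : Type*} [Group G] [MulAction G V]
    {T : SimpleGraph V}
    (hedge : ∀ u w, T.Adj u w →
      (stabilizer G u ⊓ stabilizer G w).relIndex (stabilizer G u) ≠ 0)
    {u w : V} (h : T.Reachable u w) {g : G} (hg : g ∈ stabilizer G u) :
    ∃ n ≠ 0, g ^ n ∈ stabilizer G w := by
  obtain ⟨p⟩ := h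
  induction p generalizing g with
  | nil => exact ⟨1, one_ne_zero, by rwa [pow_one]⟩
  | cons hadj _ ih =>
    obtain ⟨n, hn, -, hmem⟩ := Subgroup.exists_pow_mem_of_relIndex_ne_zero (hedge _ _ hadj) hg
    obtain ⟨m, hm, hgm⟩ := ih hmem.1.2
    exact ⟨n * m, mul_ne_zero hn.ne' hm, by rwa [pow_mul]⟩

theorem nonfree_subgroup_meets_vertex_group_general {V G : Type*} [Group G] [MulAction G V]
    (T : SimpleGraph V) (hT : T.IsTree)
    (hadj : ∀ (g : G) (u v : V), T.Adj u v → T.Adj (g • u) (g • v))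
    (hnoinv : ∀ (g : G) (u v : V), T.Adj u v → ¬(g • u = v ∧ g • v = u))
    (hvert : ∀ u : V, ∃ x : G, ¬IsOfFinOrder x ∧ MulAction.stabilizer G u = Subgroup.zpowers x)
    (hedge : ∀ u w : V, T.Adj u w →
      (MulAction.stabilizer G u ⊓ MulAction.stabilizer G w).relIndex
        (MulAction.stabilizer G u) ≠ 0 ∧
      (MulAction.stabilizer G u ⊓ MulAction.stabilizer G w).relIndex
        (MulAction.stabilizer G w) ≠ 0)
    (v : V) (a : G)
    (ha : MulAction.stabilizer G v = Subgroup.zpowers a)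
    (B : Subgroup G) (hB : ¬IsFreeGroup ↥B) :
    B ⊓ Subgroup.zpowers a ≠ ⊥ := by
  intro hbot
  refine hB (isFreeGroup_of_isTree hT (fun g => hadj g) (fun g => hnoinv g) fun b u hbu => ?_)
  obtain ⟨x, hx, hstab⟩ := hvert u
  obtain ⟨n, hn, hbn⟩ := exists_pow_mem_stabilizer_of_reachable (fun u w h => (hedge u w h).1)
    (hT.connected u v) (g := (b : G)) hbu
  have hmem : (b : G) ^ n ∈ B ⊓ Subgroup.zpowers a := ⟨pow_mem b.2 n, ha ▸ hbn⟩
  rw [hbot, Subgroup.mem_bot] at hmem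
  exact Subtype.ext (eq_one_of_pow_eq_one_of_mem_zpowers hx (hstab ▸ hbu) hn hmem)

/-- Let a group `G` act on a tree `T` (by graph automorphisms, without edge inversions)
with infinite cyclic vertex stabilizers such that each edge stabilizer has finite index
in the stabilizers of both endpoints.  Fix a vertex `v` whose stabilizer is `⟨a⟩ ≅ ℤ`.
If `B ≤ G` is a subgroup that is not free, then `B ∩ ⟨a⟩ ≠ {1}`. -/
theorem nonfree_subgroup_meets_vertex_group {V G : Type*} [Group G] [MulAction G V]
    (T : SimpleGraph V) (hT : T.IsTree)
    (hadj : ∀ (g : G) (u v : V), T.Adj u v → T.Adj (g • u) (g • v))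
    (hnoinv : ∀ (g : G) (u v : V), T.Adj u v → ¬(g • u = v ∧ g • v = u))
    (hvert : ∀ u : V, ∃ x : G, ¬IsOfFinOrder x ∧ MulAction.stabilizer G u = Subgroup.zpowers x)
    (hedge : ∀ u w : V, T.Adj u w →
      (MulAction.stabilizer G u ⊓ MulAction.stabilizer G w).relIndex
        (MulAction.stabilizer G u) ≠ 0 ∧
      (MulAction.stabilizer G u ⊓ MulAction.stabilizer G w).relIndex
        (MulAction.stabilizer G w) ≠ 0)
    (v : V) (a : G) (hnf : ¬IsOfFinOrder a)
    (ha : MulAction.stabilizer G v = Subgroup.zpowers a)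
    (B : Subgroup G) (hB : ¬IsFreeGroup ↥B) :
    B ⊓ Subgroup.zpowers a ≠ ⊥ :=
  nonfree_subgroup_meets_vertex_group_general T hT hadj hnoinv hvert hedge v a ha B hB
end
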